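/- arXiv:2111.12978 — 5 statements merged into one kernel-verified Lean document; each statement's English description precedes it below -/
import Mathlib

section
/- Given a finite signature, the proof system L_C (all propositional tautologies, modus ponens, and the axiom schemes A1–A7, A[], A¬, A∧, A[][]) is sound and strongly complete for the language L_C with respect to recursive causal models: for every set Γ ∪ {φ} of L_C formulas, Γ proves φ in L_C if and only if every recursive causal model satisfying all formulas of Γ satisfies φ. -/
open Classical

/-- A finite signature: variables sorted into exogenous and endogenous, each with a
finite nonempty range of values. -/
structure Sig : Type 1 where
  Var : Type
  exo : Var → Prop
  Val : Var → Type
  [decEqVar : DecidableEq Var]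
  [finVar : Fintype Var]
  [neVar : Nonempty Var]
  [decEqVal : ∀ X : Var, DecidableEq (Val X)]
  [finVal : ∀ X : Var, Fintype (Val X)]
  [neVal : ∀ X : Var, Nonempty (Val X)]

attribute [instance] Sig.decEqVar Sig.finVar Sig.neVar Sig.decEqVal Sig.finVal Sig.neVal

variable {S : Sig}

/-- A valuation: a value for each variable. -/
abbrev Env (S : Sig) : Type := ∀ X : S.Var, S.Val X

instance : Nonempty (Env S) := ⟨fun X => Classical.arbitrary (S.Val X)⟩

/-- Values for all variables other than `V`. -/
abbrev Others (S : Sig) (V : S.Var) : Type := ∀ X : {X : S.Var // X ≠ V}, S.Val X.val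

/-- The restriction of a valuation to the variables other than `V`. -/
def Env.restrict (A : Env S) (V : S.Var) : Others S V := fun X => A X.val

/-- A family of structural functions (only the components at endogenous variables
are meaningful). -/
abbrev StructFuns (S : Sig) : Type := ∀ V : S.Var, Others S V → S.Val V

/-- A valuation complies with the structural functions: the value of each endogenous
variable is obtained by applying its structural function to the values of all
other variables. -/
def Complies (F : StructFuns S) (A : Env S) : Prop :=
  ∀ V : S.Var, ¬ S.exo V → A V = F V (A.restrict V)

/-- The endogenous variable `V` is directly causally affected by `X` under `F`. -/
def DirAff (F : StructFuns S) (X V : S.Var) : Prop :=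
  ¬ S.exo V ∧ ∃ (h : X ≠ V) (g : Others S V) (x₁ x₂ : S.Val X),
    x₁ ≠ x₂ ∧
      F V (Function.update g ⟨X, h⟩ x₁) ≠ F V (Function.update g ⟨X, h⟩ x₂)

/-- `F` is recursive: the transitive closure of the direct causal dependence
relation is asymmetric (transitivity is automatic for `Relation.TransGen`). -/
def RecursiveF (F : StructFuns S) : Prop :=
  ∀ a b : S.Var, Relation.TransGen (DirAff F) a b → ¬ Relation.TransGen (DirAff F) b a

/-- An assignment of values to a set of pairwise distinct variables. -/
abbrev Intervention (S : Sig) : Type := ∀ X : S.Var, Option (S.Val X)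

/-- The empty assignment. -/
def iEmpty (S : Sig) : Intervention S := fun _ => none

/-- Extend an assignment by additionally setting `Y` to `y` (overriding). -/
def iUpd (I : Intervention S) (Y : S.Var) (y : S.Val Y) : Intervention S :=
  Function.update I Y (some y)

/-- Combine assignments, the second overriding the first:  `[X⃗ := x⃗, Y⃗ := y⃗]`. -/
def icomp (I J : Intervention S) : Intervention S := fun W =>
  match J W with
  | some v => some v
  | none => I W

/-- The intervened family of structural functions: intervened variables get the
constant function returning the assigned value; the rest are unchanged. -/
def intF (F : StructFuns S) (I : Intervention S) : StructFuns S :=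
  fun V g => (I V).getD (F V g)

/-- `A'` is the result of intervening with `I` on the valuation `A` (w.r.t. `F`):
exogenous intervened variables get the assigned value, exogenous non-intervened
variables keep their value, and each endogenous variable complies with its new
structural function. -/
def IntervenedVal (F : StructFuns S) (A : Env S) (I : Intervention S) (A' : Env S) : Prop :=
  (∀ X : S.Var, S.exo X → ∀ v : S.Val X, I X = some v → A' X = v) ∧
  (∀ X : S.Var, S.exo X → I X = none → A' X = A X) ∧
  (∀ V : S.Var, ¬ S.exo V → A' V = intF F I V (A'.restrict V))

/-- The intervened valuation (unique when `F` is recursive). -/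
noncomputable def intVal (F : StructFuns S) (A : Env S) (I : Intervention S) : Env S :=
  Classical.epsilon (IntervenedVal F A I)

/-- The language L_C: atoms `Y = y`, negation, conjunction, interventionist
counterfactual operators. -/
inductive Form (S : Sig) : Type where
  | eq (Y : S.Var) (y : S.Val Y) : Form S
  | neg (φ : Form S) : Form S
  | conj (φ ψ : Form S) : Form S
  | int (I : Intervention S) (φ : Form S) : Form S

namespace Form

/-- Material implication, defined from `¬` and `∧` as usual. -/
def impl (φ ψ : Form S) : Form S := Form.neg (Form.conj φ (Form.neg ψ))

/-- Disjunction, defined from `¬` and `∧` as usual. -/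
def orF (φ ψ : Form S) : Form S := Form.neg (Form.conj (Form.neg φ) (Form.neg ψ))

/-- Biconditional. -/
def iffF (φ ψ : Form S) : Form S := Form.conj (impl φ ψ) (impl ψ φ)

end Form

/-- A canonical contradiction. -/
noncomputable def botF (S : Sig) : Form S :=
  let X : S.Var := Classical.arbitrary S.Var
  let x : S.Val X := Classical.arbitrary (S.Val X)
  Form.conj (Form.eq X x) (Form.neg (Form.eq X x))

/-- A canonical tautology. -/
noncomputable def topF (S : Sig) : Form S := Form.neg (botF S)

/-- Disjunction of a list of formulas (the empty disjunction is a contradiction). -/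
noncomputable def bigOr : List (Form S) → Form S
  | [] => botF S
  | φ :: l => l.foldl Form.orF φ

/-- Conjunction of a list of formulas (the empty conjunction is a tautology). -/
noncomputable def bigConj : List (Form S) → Form S
  | [] => topF S
  | φ :: l => l.foldl Form.conj φ

/-- `φ` is an instance of a propositional tautology: it evaluates to `true` under
every Boolean valuation that respects negation and conjunction (treating all
other formulas as atoms). -/
def Tauto (φ : Form S) : Prop :=
  ∀ v : Form S → Bool,
    (∀ ψ : Form S, v (Form.neg ψ) = !(v ψ)) →
    (∀ ψ χ : Form S, v (Form.conj ψ χ) = (v ψ && v χ)) →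
    v φ = true

/-- The assignment `[Z⃗ := z⃗, X := x]` where `Z⃗` lists all variables other than
`X` and `V`, used in the formula `X ⇝ V`. -/
def ltInt (X V : S.Var) (g : ∀ W : {W : S.Var // W ≠ X ∧ W ≠ V}, S.Val W.val)
    (x : S.Val X) : Intervention S := fun W =>
  if h : W = X then some (h.symm ▸ x)
  else if h' : W = V then none
  else some (g ⟨W, ⟨h, h'⟩⟩)

/-- The formula `X ⇝ V`: the disjunction, over tuples `z⃗` of values for all
variables other than `X` and `V`, distinct values `x₁ ≠ x₂` of `X` and distinct
values `v₁ ≠ v₂` of `V`, of `[Z⃗:=z⃗, X:=x₁]V=v₁ ∧ [Z⃗:=z⃗, X:=x₂]V=v₂`. -/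
noncomputable def leadsTo (X V : S.Var) : Form S :=
  bigOr ((Finset.univ.filter
      (fun p : (∀ W : {W : S.Var // W ≠ X ∧ W ≠ V}, S.Val W.val) ×
          (S.Val X × S.Val X) × (S.Val V × S.Val V) =>
        p.2.1.1 ≠ p.2.1.2 ∧ p.2.2.1 ≠ p.2.2.2)).toList.map
    (fun p =>
      Form.conj
        (Form.int (ltInt X V p.1 p.2.1.1) (Form.eq V p.2.2.1))
        (Form.int (ltInt X V p.1 p.2.1.2) (Form.eq V p.2.2.2))))

/-- The chain `X₀ ⇝ X₁ ∧ ⋯ ∧ X_k ⇝ X_{k+1}`. -/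
noncomputable def chainConj (X : ℕ → S.Var) : ℕ → Form S
  | 0 => leadsTo (X 0) (X 1)
  | n + 1 => Form.conj (chainConj X n) (leadsTo (X (n + 1)) (X (n + 2)))

/-- `ψ₁ → (ψ₂ → ⋯ → (ψₙ → φ))` for a list of premises. -/
def impsFrom : List (Form S) → Form S → Form S
  | [], φ => φ
  | ψ :: l, φ => Form.impl ψ (impsFrom l φ)

/-- Satisfaction of an L_C formula in a causal model `⟨F, A⟩`. -/
def SatC : Form S → StructFuns S → Env S → Prop
  | Form.eq Y y, _, A => A Y = y
  | Form.neg φ, F, A => ¬ SatC φ F A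
  | Form.conj φ ψ, F, A => SatC φ F A ∧ SatC ψ F A
  | Form.int I φ, F, A => SatC φ (intF F I) (intVal F A I)

/-- The proof system L_C. -/
inductive ThmC : Form S → Prop where
  | taut : ∀ {φ : Form S}, Tauto φ → ThmC φ
  | mp : ∀ {φ ψ : Form S}, ThmC (Form.impl φ ψ) → ThmC φ → ThmC ψ
  | a1 : ∀ (I : Intervention S) (Y : S.Var) (y y' : S.Val Y), y ≠ y' →
      ThmC (Form.impl (Form.int I (Form.eq Y y)) (Form.neg (Form.int I (Form.eq Y y'))))
  | a2 : ∀ (I : Intervention S) (Y : S.Var),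
      ThmC (bigOr (((Finset.univ : Finset (S.Val Y)).toList).map
        (fun y => Form.int I (Form.eq Y y))))
  | a3 : ∀ (I : Intervention S) (Y Z : S.Var) (y : S.Val Y) (z : S.Val Z),
      ThmC (Form.impl (Form.conj (Form.int I (Form.eq Y y)) (Form.int I (Form.eq Z z)))
        (Form.int (iUpd I Y y) (Form.eq Z z)))
  | a4 : ∀ (I : Intervention S) (Y : S.Var) (y : S.Val Y),
      ThmC (Form.int (iUpd I Y y) (Form.eq Y y))
  | a5 : ∀ (I : Intervention S) (Y Z : S.Var) (y : S.Val Y) (z : S.Val Z), Y ≠ Z →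
      ThmC (Form.impl
        (Form.conj (Form.int (iUpd I Y y) (Form.eq Z z)) (Form.int (iUpd I Z z) (Form.eq Y y)))
        (Form.int I (Form.eq Z z)))
  | a6 : ∀ (X : ℕ → S.Var) (k : ℕ),
      (∀ i : ℕ, i ≤ k → X i ≠ X (i + 1)) → X (k + 1) ≠ X 0 →
      ThmC (Form.impl (chainConj X k) (Form.neg (leadsTo (X (k + 1)) (X 0))))
  | a7 : ∀ (I : Intervention S) (U : S.Var) (u : S.Val U), S.exo U → I U = none →
      ThmC (Form.iffF (Form.int (iEmpty S) (Form.eq U u)) (Form.int I (Form.eq U u)))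
  | aEmpty : ∀ (Y : S.Var) (y : S.Val Y),
      ThmC (Form.iffF (Form.eq Y y) (Form.int (iEmpty S) (Form.eq Y y)))
  | aNeg : ∀ (I : Intervention S) (φ : Form S),
      ThmC (Form.iffF (Form.int I (Form.neg φ)) (Form.neg (Form.int I φ)))
  | aConj : ∀ (I : Intervention S) (φ ψ : Form S),
      ThmC (Form.iffF (Form.int I (Form.conj φ ψ))
        (Form.conj (Form.int I φ) (Form.int I ψ)))
  | aIntInt : ∀ (I J : Intervention S) (φ : Form S),
      ThmC (Form.iffF (Form.int I (Form.int J φ)) (Form.int (icomp I J) φ))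

/-- Strong derivability from a set of premises in L_C. -/
def ProvC (Γ : Set (Form S)) (φ : Form S) : Prop :=
  ∃ l : List (Form S), (∀ ψ ∈ l, ψ ∈ Γ) ∧ ThmC (impsFrom l φ)

/-!
Recursiveness makes the transitive closure of direct causal dependence a well-founded relation,
so the equations defining an intervened valuation have exactly one solution, built by
well-founded recursion. Soundness is then a check of each axiom; A5 follows from that uniqueness,
and A6 because `X ⇝ V` can only hold when `V` directly depends on `X`.

Completeness is a canonical-model construction. A maximal consistent set `Δ` determines, by A1
and A2, a value of every variable under every intervention; the structural function of `V` at
`g` is the value of `V` under the intervention setting all other variables to `g`. By A3,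
setting variables to the values `Δ` already predicts for them changes nothing, so the
valuations read off `Δ` solve the intervened equations (with A4 and A7 for the intervened and
exogenous variables); A6 excludes causal cycles; and A¬, A∧, A[][] and A[] give a truth lemma
saying that the canonical model satisfies exactly the formulas in `Δ`.
-/

/-! ### Propositional reasoning -/

structure BoolVal (S : Sig) where
  toFun : Form S → Bool
  map_neg' : ∀ ψ, toFun (Form.neg ψ) = !toFun ψ
  map_conj' : ∀ ψ χ, toFun (Form.conj ψ χ) = (toFun ψ && toFun χ)

namespace BoolVal

instance : CoeFun (BoolVal S) (fun _ => Form S → Bool) := ⟨toFun⟩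

variable (v : BoolVal S) (φ ψ : Form S) (l : List (Form S))

@[simp] lemma map_neg : v (Form.neg φ) = !v φ := v.map_neg' φ

@[simp] lemma map_conj : v (Form.conj φ ψ) = (v φ && v ψ) := v.map_conj' φ ψ

@[simp] lemma map_impl : v (Form.impl φ ψ) = (!v φ || v ψ) := by
  simp [Form.impl]

@[simp] lemma map_orF : v (Form.orF φ ψ) = (v φ || v ψ) := by
  simp [Form.orF]

@[simp] lemma map_botF : v (botF S) = false := by
  simp [botF]

lemma map_foldl_orF : v (l.foldl Form.orF φ) = (v φ || l.any v) := by
  induction l generalizing φ with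
  | nil => simp
  | cons χ l ih => simp [ih, Bool.or_assoc]

@[simp] lemma map_bigOr : v (bigOr l) = l.any v := by
  cases l with
  | nil => simp [bigOr]
  | cons φ l => simp [bigOr, map_foldl_orF]

@[simp] lemma map_impsFrom : v (impsFrom l φ) = (!l.all v || v φ) := by
  induction l with
  | nil => simp [impsFrom]
  | cons χ l ih => simp [impsFrom, ih, Bool.or_assoc]

end BoolVal

lemma ThmC.of_forall_boolVal {φ : Form S} (h : ∀ v : BoolVal S, v φ = true) : ThmC φ :=
  ThmC.taut fun v hneg hconj => h ⟨v, hneg, hconj⟩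

namespace ProvC

variable {Γ : Set (Form S)} {φ ψ : Form S}

lemma of_thmC (h : ThmC φ) : ProvC Γ φ := ⟨[], by simp, h⟩

lemma of_mem (h : φ ∈ Γ) : ProvC Γ φ :=
  ⟨[φ], by simpa using h, ThmC.of_forall_boolVal fun v => by simp [impsFrom]⟩

lemma mp (h₁ : ProvC Γ (Form.impl φ ψ)) (h₂ : ProvC Γ φ) : ProvC Γ ψ := by
  obtain ⟨l₁, hl₁, t₁⟩ := h₁
  obtain ⟨l₂, hl₂, t₂⟩ := h₂
  refine ⟨l₁ ++ l₂, by simpa [or_imp, forall_and] using And.intro hl₁ hl₂, ?_⟩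
  refine ThmC.mp (ThmC.mp (ThmC.of_forall_boolVal fun v => ?_) t₁) t₂
  simp only [BoolVal.map_impl, BoolVal.map_impsFrom, List.all_append]
  cases v φ <;> cases v ψ <;> cases l₁.all v <;> cases l₂.all v <;> rfl

lemma of_impsFrom {l : List (Form S)} (h : ProvC Γ (impsFrom l φ))
    (hl : ∀ ψ ∈ l, ProvC Γ ψ) : ProvC Γ φ := by
  induction l with
  | nil => exact h
  | cons χ l ih => exact ih (h.mp (hl χ (by simp))) fun ψ hψ => hl ψ (by simp [hψ])

lemma of_entails {l : List (Form S)} (hl : ∀ ψ ∈ l, ProvC Γ ψ)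
    (h : ∀ v : BoolVal S, (∀ ψ ∈ l, v ψ = true) → v φ = true) : ProvC Γ φ := by
  refine of_impsFrom (of_thmC (ThmC.of_forall_boolVal fun v => ?_)) hl
  by_cases hv : ∀ ψ ∈ l, v ψ = true
  · simp [h v hv]
  · have : l.all v = false := by simpa using hv
    simp [this]

lemma deduction (h : ProvC (insert ψ Γ) φ) : ProvC Γ (Form.impl ψ φ) := by
  obtain ⟨l, hl, t⟩ := h
  refine ⟨l.filter (· ≠ ψ), fun χ hχ => ?_, ThmC.mp (ThmC.of_forall_boolVal fun v => ?_) t⟩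
  · simp only [List.mem_filter, decide_eq_true_eq] at hχ
    exact (hl χ hχ.1).resolve_left hχ.2
  · have hall : (l.filter (· ≠ ψ)).all v = true → v ψ = true → l.all v = true := by
      simp only [List.all_eq_true, List.mem_filter, decide_eq_true_eq, and_imp]
      intro hrest hψ χ hχ
      by_cases hχψ : χ = ψ
      · rwa [hχψ]
      · exact hrest χ hχ hχψ
    simp only [BoolVal.map_impl, BoolVal.map_impsFrom]
    revert hall
    cases (l.filter (· ≠ ψ)).all v <;> cases v ψ <;> cases l.all v <;> cases v φ <;> decide

end ProvC

/-! ### Maximal consistent sets -/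

def ConC (Γ : Set (Form S)) : Prop := ¬ ProvC Γ (botF S)

def MaxConC (Δ : Set (Form S)) : Prop := Maximal ConC Δ

lemma conC_insert_neg {Γ : Set (Form S)} {φ : Form S} (h : ¬ ProvC Γ φ) :
    ConC (insert (Form.neg φ) Γ) := fun hbot =>
  h (ProvC.of_entails (l := [Form.impl (Form.neg φ) (botF S)]) (by simpa using hbot.deduction)
    fun v => by cases hφ : v φ <;> simp [hφ])

lemma exists_maxConC_superset {Γ : Set (Form S)} (h : ConC Γ) :
    ∃ Δ, Γ ⊆ Δ ∧ MaxConC Δ := by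
  refine zorn_subset_nonempty {Δ | ConC Δ} (fun c hc hchain hne => ?_) Γ h
  refine ⟨⋃₀ c, fun ⟨l, hl, t⟩ => ?_, fun _ => Set.subset_sUnion_of_mem⟩
  obtain ⟨Δ, hΔ, hlΔ⟩ := hchain.directedOn.exists_mem_subset_of_finite_of_subset_sUnion hne
    l.finite_toSet hl
  exact hc hΔ ⟨l, hlΔ, t⟩

namespace MaxConC

variable {Δ : Set (Form S)} {φ ψ : Form S}

lemma conC (hΔ : MaxConC Δ) : ConC Δ := hΔ.prop

lemma mem_of_provC (hΔ : MaxConC Δ) (h : ProvC Δ φ) : φ ∈ Δ :=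
  Maximal.mem_of_prop_insert hΔ fun hbot => hΔ.conC (hbot.deduction.mp h)

lemma mem_of_entails (hΔ : MaxConC Δ) {l : List (Form S)} (hl : ∀ ψ ∈ l, ψ ∈ Δ)
    (h : ∀ v : BoolVal S, (∀ ψ ∈ l, v ψ = true) → v φ = true) : φ ∈ Δ :=
  hΔ.mem_of_provC (ProvC.of_entails (fun ψ hψ => ProvC.of_mem (hl ψ hψ)) h)

lemma mem_of_thmC (hΔ : MaxConC Δ) (h : ThmC φ) : φ ∈ Δ :=
  hΔ.mem_of_provC (ProvC.of_thmC h)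

lemma mem_of_impl_mem (hΔ : MaxConC Δ) (h₁ : Form.impl φ ψ ∈ Δ) (h₂ : φ ∈ Δ) : ψ ∈ Δ :=
  hΔ.mem_of_entails (l := [Form.impl φ ψ, φ]) (by simp [h₁, h₂])
    fun v hv => by simpa [hv φ (by simp)] using hv (Form.impl φ ψ) (by simp)

lemma neg_mem_iff (hΔ : MaxConC Δ) : Form.neg φ ∈ Δ ↔ φ ∉ Δ := by
  refine ⟨fun hn hp => hΔ.conC ?_, fun hp => hΔ.mem_of_provC ?_⟩
  · exact ProvC.of_entails (l := [φ, Form.neg φ]) (by simp [ProvC.of_mem, hn, hp])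
      fun v hv => by simpa [hv φ (by simp)] using hv (Form.neg φ) (by simp)
  · have hbot : ProvC Δ (Form.impl φ (botF S)) :=
      ProvC.deduction (not_not.1 fun h => hp (Maximal.mem_of_prop_insert hΔ h))
    exact ProvC.of_entails (l := [Form.impl φ (botF S)]) (by simpa using hbot)
      fun v hv => by simpa using hv (Form.impl φ (botF S)) (by simp)

lemma conj_mem_iff (hΔ : MaxConC Δ) : Form.conj φ ψ ∈ Δ ↔ φ ∈ Δ ∧ ψ ∈ Δ := by
  refine ⟨fun h => ⟨?_, ?_⟩, fun h => ?_⟩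
  · exact hΔ.mem_of_entails (l := [_]) (by simpa using h) fun v hv => by simp_all
  · exact hΔ.mem_of_entails (l := [_]) (by simpa using h) fun v hv => by simp_all
  · exact hΔ.mem_of_entails (l := [φ, ψ]) (by simpa using h) fun v hv => by simp_all

lemma mem_iff_of_thmC_iffF (hΔ : MaxConC Δ) (h : ThmC (Form.iffF φ ψ)) : φ ∈ Δ ↔ ψ ∈ Δ := by
  obtain ⟨h₁, h₂⟩ := hΔ.conj_mem_iff.1 (hΔ.mem_of_thmC h)
  exact ⟨hΔ.mem_of_impl_mem h₁, hΔ.mem_of_impl_mem h₂⟩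

lemma exists_mem_of_bigOr_mem (hΔ : MaxConC Δ) {l : List (Form S)} (h : bigOr l ∈ Δ) :
    ∃ ψ ∈ l, ψ ∈ Δ := by
  by_contra! hl
  refine hΔ.conC (ProvC.of_entails (l := bigOr l :: l.map Form.neg) ?_ fun v hv => ?_)
  · simpa [ProvC.of_mem, h] using fun ψ hψ => ProvC.of_mem ((hΔ.neg_mem_iff).2 (hl ψ hψ))
  · simp only [List.mem_cons, List.mem_map, forall_eq_or_imp, forall_exists_index, and_imp,
      forall_apply_eq_imp_iff₂, BoolVal.map_bigOr, BoolVal.map_neg, List.any_eq_true,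
      Bool.not_eq_eq_eq_not, Bool.not_true] at hv
    obtain ⟨⟨ψ, hψ, hvψ⟩, hneg⟩ := hv
    simp [hneg ψ hψ] at hvψ

lemma bigOr_mem_of_mem (hΔ : MaxConC Δ) {l : List (Form S)} (hψl : ψ ∈ l) (hψ : ψ ∈ Δ) :
    bigOr l ∈ Δ :=
  hΔ.mem_of_entails (l := [ψ]) (by simpa using hψ)
    fun v hv => by simpa using ⟨ψ, hψl, hv ψ (by simp)⟩

end MaxConC

/-! ### Intervened valuations -/

lemma apply_eq_of_agree_of_update_invariant {ι γ : Type*} [Fintype ι] [DecidableEq ι]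
    {β : ι → Type*} {f : (∀ i, β i) → γ} (p : ι → Prop)
    (hf : ∀ i, ¬ p i → ∀ g x, f (Function.update g i x) = f g) {g g' : ∀ i, β i}
    (h : ∀ i, p i → g i = g' i) : f g = f g' := by
  suffices key : ∀ s : Finset ι, (∀ i ∈ s, ¬ p i) →
      ∀ g, (∀ i ∉ s, g i = g' i) → f g = f g' from
    key (Finset.univ.filter (¬ p ·)) (by simp) g fun i hi => h i (by simpa using hi)
  intro s
  induction s using Finset.induction_on with
  | empty => exact fun _ g hg => congrArg f (funext fun i => hg i (Finset.notMem_empty i))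
  | insert a s _ ih =>
    intro hs g hg
    rw [← hf a (hs a (Finset.mem_insert_self a s)) g (g' a)]
    refine ih (fun i hi => hs i (Finset.mem_insert_of_mem hi)) _ fun i hi => ?_
    by_cases hia : i = a
    · subst hia
      exact Function.update_self ..
    · rw [Function.update_of_ne hia]
      exact hg i (by simp [hia, hi])

lemma DirAff.ne {F : StructFuns S} {X V : S.Var} (h : DirAff F X V) : X ≠ V := h.2.fst

lemma structFun_congr {F : StructFuns S} {V : S.Var} (hV : ¬ S.exo V) {g g' : Others S V}
    (h : ∀ X : {X : S.Var // X ≠ V}, DirAff F X V → g X = g' X) : F V g = F V g' := by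
  refine apply_eq_of_agree_of_update_invariant (fun X : {X // X ≠ V} => DirAff F X V)
    (fun X hX g x => ?_) h
  by_contra hne
  refine hX ⟨hV, X.2, g, x, g X, fun hx => hne (by rw [hx, Function.update_eq_self]), ?_⟩
  rwa [Function.update_eq_self]

/-- One round of the intervened equations; its fixed points are the intervened valuations. -/
noncomputable def intStep (F : StructFuns S) (A : Env S) (I : Intervention S) (B : Env S) : Env S :=
  fun X => (I X).getD (if S.exo X then A X else F X (B.restrict X))

section Semantics

variable {F : StructFuns S} {A B C : Env S} {I J : Intervention S}

lemma intervenedVal_iff : IntervenedVal F A I B ↔ intStep F A I B = B := by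
  refine ⟨fun ⟨hsome, hnone, hendo⟩ => funext fun X => ?_, fun h => ⟨?_, ?_, ?_⟩⟩
  · by_cases hX : S.exo X
    · cases hI : I X with
      | none => simp [intStep, hI, hX, hnone X hX hI]
      | some v => simp [intStep, hI, hsome X hX v hI]
    · simp [intStep, hX, hendo X hX, intF]
  · intro X _ v hI
    simpa [intStep, hI] using (congrFun h X).symm
  · intro X hX hI
    simpa [intStep, hI, hX] using (congrFun h X).symm
  · intro V hV
    simpa [intStep, hV, intF] using (congrFun h V).symm

lemma intStep_congr {V : S.Var} (h : ∀ X, DirAff F X V → B X = C X) :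
    intStep F A I B V = intStep F A I C V := by
  by_cases hV : S.exo V
  · simp [intStep, hV]
  · simp only [intStep, hV, if_false]
    congr 1
    exact structFun_congr hV fun X hX => h X hX

lemma wellFounded_transGen_dirAff (hF : RecursiveF F) :
    WellFounded (Relation.TransGen (DirAff F)) :=
  have : IsTrans S.Var (Relation.TransGen (DirAff F)) := ⟨fun _ _ _ => .trans⟩
  have : Std.Irrefl (Relation.TransGen (DirAff F)) := ⟨fun a h => hF a a h h⟩
  Finite.wellFounded_of_trans_of_irrefl _

lemma exists_intStep_eq_self (hF : RecursiveF F) (A : Env S) (I : Intervention S) :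
    ∃ B, intStep F A I B = B := by
  have hwf := wellFounded_transGen_dirAff hF
  let below (V : S.Var) (rec : ∀ X, Relation.TransGen (DirAff F) X V → S.Val X) : Env S :=
    fun X => if h : Relation.TransGen (DirAff F) X V then rec X h else Classical.arbitrary _
  let B : Env S := hwf.fix fun V rec => intStep F A I (below V rec) V
  refine ⟨B, funext fun V => ?_⟩
  rw [show B V = intStep F A I (below V fun X _ => B X) V from hwf.fix_eq _ V]
  exact intStep_congr fun X hX => by simp [below, Relation.TransGen.single hX]

lemma eq_of_intStep_eq_self (hF : RecursiveF F) (hB : intStep F A I B = B)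
    (hC : intStep F A I C = C) : B = C := by
  funext V
  induction V using (wellFounded_transGen_dirAff hF).induction with
  | _ V ih =>
    rw [← hB, ← hC]
    exact intStep_congr fun X hX => ih X (.single hX)

lemma intStep_intVal (hF : RecursiveF F) : intStep F A I (intVal F A I) = intVal F A I :=
  intervenedVal_iff.1 <| Classical.epsilon_spec <|
    (exists_intStep_eq_self hF A I).imp fun _ => intervenedVal_iff.2

lemma intVal_eq_of_intStep_eq_self (hF : RecursiveF F) (hB : intStep F A I B = B) :
    intVal F A I = B :=
  eq_of_intStep_eq_self hF (intStep_intVal hF) hB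

lemma intVal_of_some (hF : RecursiveF F) {X : S.Var} {x : S.Val X} (h : I X = some x) :
    intVal F A I X = x := by
  rw [← intStep_intVal hF]
  simp [intStep, h]

lemma intVal_of_exo (hF : RecursiveF F) {X : S.Var} (hX : S.exo X) (h : I X = none) :
    intVal F A I X = A X := by
  rw [← intStep_intVal hF]
  simp [intStep, h, hX]

lemma intVal_of_endo (hF : RecursiveF F) {X : S.Var} (hX : ¬ S.exo X) (h : I X = none) :
    intVal F A I X = F X ((intVal F A I).restrict X) := by
  conv_lhs => rw [← intStep_intVal hF]
  simp [intStep, h, hX]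

lemma intStep_iUpd {Y : S.Var} (y : S.Val Y) :
    intStep F A (iUpd I Y y) B = Function.update (intStep F A I B) Y y := by
  funext X
  by_cases hXY : X = Y
  · subst hXY
    simp [intStep, iUpd]
  · simp [intStep, iUpd, hXY]

lemma intStep_iUpd_eq_self {Y : S.Var} {y : S.Val Y} (hB : intStep F A I B = B)
    (hY : B Y = y) :
    intStep F A (iUpd I Y y) B = B := by
  rw [intStep_iUpd, hB, ← hY, Function.update_eq_self]

lemma intStep_eq_self_of_iUpd {Y : S.Var} {y : S.Val Y}
    (hB : intStep F A (iUpd I Y y) B = B) (hY : intStep F A I B Y = B Y) :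
    intStep F A I B = B := by
  rw [intStep_iUpd] at hB
  have hBY : B Y = y := by rw [← hB, Function.update_self]
  calc intStep F A I B = Function.update (intStep F A I B) Y (B Y) := by
        rw [← hY, Function.update_eq_self]
    _ = B := by rw [hBY, hB]

lemma intStep_iEmpty_eq_self_iff : intStep F A (iEmpty S) A = A ↔ Complies F A := by
  refine ⟨fun h V hV => ?_, fun h => funext fun X => ?_⟩
  · simpa [intStep, iEmpty, hV] using (congrFun h V).symm
  · by_cases hX : S.exo X
    · simp [intStep, iEmpty, hX]
    · simp [intStep, iEmpty, hX, ← h X hX]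

lemma intVal_iEmpty (hF : RecursiveF F) (hA : Complies F A) : intVal F A (iEmpty S) = A :=
  intVal_eq_of_intStep_eq_self hF (intStep_iEmpty_eq_self_iff.2 hA)

lemma intF_icomp : intF (intF F I) J = intF F (icomp I J) := by
  funext V g
  simp only [intF, icomp]
  cases J V <;> rfl

lemma DirAff.of_intF {X V : S.Var} (h : DirAff (intF F I) X V) : DirAff F X V := by
  obtain ⟨hV, hXV, g, x₁, x₂, hx, hne⟩ := h
  cases hI : I V with
  | some v => simp [intF, hI] at hne
  | none => exact ⟨hV, hXV, g, x₁, x₂, hx, by simpa [intF, hI] using hne⟩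

lemma RecursiveF.intF (hF : RecursiveF F) (I : Intervention S) : RecursiveF (intF F I) :=
  fun a b hab hba => hF a b (Relation.TransGen.mono (fun _ _ => DirAff.of_intF) _ _ hab)
    (Relation.TransGen.mono (fun _ _ => DirAff.of_intF) _ _ hba)

lemma intVal_intF (hF : RecursiveF F) :
    intVal (intF F I) (intVal F A I) J = intVal F A (icomp I J) := by
  refine intVal_eq_of_intStep_eq_self (hF.intF I) (funext fun X => ?_)
  conv_rhs => rw [← intStep_intVal hF]
  cases hJ : J X with
  | some v => simp [intStep, icomp, hJ]
  | none =>
    by_cases hX : S.exo X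
    · cases hI : I X with
      | none => simp [intStep, icomp, hJ, hI, hX, intVal_of_exo hF hX hI]
      | some v => simp [intStep, icomp, hJ, hI, hX, intVal_of_some hF hI]
    · simp [intStep, icomp, hJ, hX, intF]

/-! ### Soundness -/

noncomputable def BoolVal.ofSatC (F : StructFuns S) (A : Env S) : BoolVal S where
  toFun ψ := decide (SatC ψ F A)
  map_neg' ψ := by by_cases h : SatC ψ F A <;> simp [SatC, h]
  map_conj' ψ χ := by by_cases h : SatC ψ F A <;> simp [SatC, h]

lemma satC_iff_ofSatC {φ : Form S} : SatC φ F A ↔ BoolVal.ofSatC F A φ = true := by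
  simp [BoolVal.ofSatC]

lemma satC_impl {φ ψ : Form S} : SatC (Form.impl φ ψ) F A ↔ (SatC φ F A → SatC ψ F A) := by
  simp only [satC_iff_ofSatC, BoolVal.map_impl]
  cases BoolVal.ofSatC F A φ <;> simp

lemma satC_iffF {φ ψ : Form S} : SatC (Form.iffF φ ψ) F A ↔ (SatC φ F A ↔ SatC ψ F A) := by
  simp only [Form.iffF, SatC.eq_3, satC_impl]
  exact iff_iff_implies_and_implies.symm

lemma satC_bigOr {l : List (Form S)} : SatC (bigOr l) F A ↔ ∃ ψ ∈ l, SatC ψ F A := by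
  simp only [satC_iff_ofSatC, BoolVal.map_bigOr, List.any_eq_true]

lemma satC_of_satC_impsFrom {l : List (Form S)} {φ : Form S} (h : SatC (impsFrom l φ) F A)
    (hl : ∀ ψ ∈ l, SatC ψ F A) : SatC φ F A := by
  simp only [satC_iff_ofSatC, BoolVal.map_impsFrom] at h hl ⊢
  simpa [List.all_eq_true.2 hl] using h

lemma intVal_iUpd_of_intVal (hF : RecursiveF F) {Y : S.Var} {y : S.Val Y}
    (h : intVal F A I Y = y) : intVal F A (iUpd I Y y) = intVal F A I :=
  intVal_eq_of_intStep_eq_self hF (intStep_iUpd_eq_self (intStep_intVal hF) h)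

lemma iUpd_comm {Y Z : S.Var} (hYZ : Y ≠ Z) (y : S.Val Y) (z : S.Val Z) :
    iUpd (iUpd I Y y) Z z = iUpd (iUpd I Z z) Y y :=
  Function.update_comm hYZ _ _ I

lemma intVal_eq_of_iUpd_of_iUpd (hF : RecursiveF F) {Y Z : S.Var} {y : S.Val Y}
    {z : S.Val Z} (hYZ : Y ≠ Z) (hZ : intVal F A (iUpd I Y y) Z = z)
    (hY : intVal F A (iUpd I Z z) Y = y) : intVal F A I Z = z := by
  set B := intVal F A (iUpd I Z z)
  -- both valuations solve the equations of `[I, Y:=y, Z:=z]`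
  have hB : intVal F A (iUpd I Y y) = B := by
    refine eq_of_intStep_eq_self hF (I := iUpd (iUpd I Y y) Z z)
      (intStep_iUpd_eq_self (intStep_intVal hF) hZ) ?_
    rw [iUpd_comm hYZ]
    exact intStep_iUpd_eq_self (intStep_intVal hF) hY
  have hBY : intStep F A I B Y = B Y := by
    have := congrFun (intStep_intVal hF (A := A) (I := iUpd I Z z)) Y
    rwa [intStep_iUpd, Function.update_of_ne hYZ] at this
  rw [← hB] at hBY
  rw [intVal_eq_of_intStep_eq_self hF (intStep_eq_self_of_iUpd (intStep_intVal hF) hBY), hZ]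

def fullI (V : S.Var) (g : Others S V) : Intervention S := fun W =>
  if h : W = V then none else some (g ⟨W, h⟩)

lemma ltInt_eq_fullI {X V : S.Var} (hXV : X ≠ V) (g : Others S V) (x : S.Val X) :
    ltInt X V (fun W => g ⟨W.1, W.2.2⟩) x = fullI V (Function.update g ⟨X, hXV⟩ x) := by
  funext W
  by_cases hWX : W = X
  · subst hWX
    simp [ltInt, fullI, hXV]
  · by_cases hWV : W = V
    · subst hWV
      simp [ltInt, fullI, hWX]
    · simp [ltInt, fullI, hWX, hWV]

lemma intVal_fullI (hF : RecursiveF F) {V : S.Var} (hV : ¬ S.exo V) (g : Others S V) :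
    intVal F A (fullI V g) V = F V g := by
  rw [intVal_of_endo hF hV (by simp [fullI])]
  congr 1
  funext W
  exact intVal_of_some hF (by simp [fullI, W.2])

lemma dirAff_of_satC_leadsTo (hF : RecursiveF F) {X V : S.Var} (hXV : X ≠ V)
    (h : SatC (leadsTo X V) F A) : DirAff F X V := by
  simp only [leadsTo, satC_bigOr, List.mem_map, Finset.mem_toList, Finset.mem_filter,
    Finset.mem_univ, true_and] at h
  obtain ⟨_, ⟨⟨g, ⟨x₁, x₂⟩, ⟨v₁, v₂⟩⟩, ⟨hx, hv⟩, rfl⟩, h₁, h₂⟩ := h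
  change intVal F A (ltInt X V g x₁) V = v₁ at h₁
  change intVal F A (ltInt X V g x₂) V = v₂ at h₂
  have hltV : ∀ x, ltInt X V g x V = none := fun x => by simp [ltInt, Ne.symm hXV]
  by_cases hV : S.exo V
  · rw [intVal_of_exo hF hV (hltV x₁)] at h₁
    rw [intVal_of_exo hF hV (hltV x₂)] at h₂
    exact absurd (h₁.symm.trans h₂) hv
  · let G : Others S V := fun W =>
      if h : W.1 = X then Classical.arbitrary _ else g ⟨W.1, h, W.2⟩
    have hG : (fun W : {W : S.Var // W ≠ X ∧ W ≠ V} => G ⟨W.1, W.2.2⟩) = g :=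
      funext fun W => dif_neg W.2.1
    refine ⟨hV, hXV, G, x₁, x₂, hx, ?_⟩
    rwa [← intVal_fullI hF hV (A := A), ← intVal_fullI hF hV (A := A), ← ltInt_eq_fullI,
      ← ltInt_eq_fullI, hG, h₁, h₂]

lemma transGen_of_satC_chainConj (hF : RecursiveF F) {X : ℕ → S.Var} {k : ℕ}
    (hadj : ∀ i ≤ k, X i ≠ X (i + 1)) (h : SatC (chainConj X k) F A) :
    Relation.TransGen (DirAff F) (X 0) (X (k + 1)) := by
  induction k with
  | zero => exact .single (dirAff_of_satC_leadsTo hF (hadj 0 le_rfl) h)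
  | succ k ih =>
    exact .tail (ih (fun i hi => hadj i (by omega)) h.1)
      (dirAff_of_satC_leadsTo hF (hadj _ le_rfl) h.2)

theorem ThmC.satC {φ : Form S} (h : ThmC φ) (hF : RecursiveF F) (hA : Complies F A) :
    SatC φ F A := by
  induction h with
  | taut ht =>
    exact satC_iff_ofSatC.2 (ht _ (BoolVal.ofSatC F A).map_neg' (BoolVal.ofSatC F A).map_conj')
  | mp _ _ ih₁ ih₂ => exact satC_impl.1 ih₁ ih₂
  | a1 I Y y y' hyy' => exact satC_impl.2 fun h₁ h₂ => hyy' (h₁.symm.trans h₂)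
  | a2 I Y => exact satC_bigOr.2 ⟨_, List.mem_map.2 ⟨intVal F A I Y, by simp, rfl⟩, rfl⟩
  | a3 I Y Z y z =>
    refine satC_impl.2 fun ⟨hY, hZ⟩ => ?_
    change intVal F A (iUpd I Y y) Z = z
    rwa [intVal_iUpd_of_intVal hF hY]
  | a4 I Y y => exact intVal_of_some hF (by simp [iUpd])
  | a5 I Y Z y z hYZ =>
    exact satC_impl.2 fun ⟨h₁, h₂⟩ => intVal_eq_of_iUpd_of_iUpd hF hYZ h₁ h₂
  | a6 X k hadj hlast =>
    exact satC_impl.2 fun hchain hclose => hF _ _ (transGen_of_satC_chainConj hF hadj hchain)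
      (.single (dirAff_of_satC_leadsTo hF hlast hclose))
  | a7 I U u hU hI =>
    exact satC_iffF.2 (by simp only [SatC]; rw [intVal_iEmpty hF hA, intVal_of_exo hF hU hI])
  | aEmpty Y y => exact satC_iffF.2 (by simp only [SatC]; rw [intVal_iEmpty hF hA])
  | aNeg I φ => exact satC_iffF.2 Iff.rfl
  | aConj I φ ψ => exact satC_iffF.2 Iff.rfl
  | aIntInt I J φ => exact satC_iffF.2 (by simp only [SatC]; rw [intF_icomp, intVal_intF hF])

theorem ProvC.satC {Γ : Set (Form S)} {φ : Form S} (h : ProvC Γ φ) (hF : RecursiveF F)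
    (hA : Complies F A) (hΓ : ∀ ψ ∈ Γ, SatC ψ F A) : SatC φ F A := by
  obtain ⟨l, hlΓ, hl⟩ := h
  exact satC_of_satC_impsFrom (hl.satC hF hA) fun ψ hψ => hΓ ψ (hlΓ ψ hψ)

end Semantics

/-! ### The canonical model -/

lemma Relation.TransGen.exists_seq {α : Type*} {r : α → α → Prop} {a b : α}
    (h : Relation.TransGen r a b) :
    ∃ (k : ℕ) (f : ℕ → α), f 0 = a ∧ f (k + 1) = b ∧ ∀ i ≤ k, r (f i) (f (i + 1)) := by
  induction h with
  | @single b hab => exact ⟨0, fun i => if i = 0 then a else b, rfl, rfl, by simpa⟩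
  | @tail b c _ hbc ih =>
    obtain ⟨k, f, h0, hk, hf⟩ := ih
    refine ⟨k + 1, Function.update f (k + 1 + 1) c, ?_, Function.update_self .., fun i hi => ?_⟩
    · rw [Function.update_of_ne (by omega), h0]
    · rw [Function.update_of_ne (by omega : i ≠ k + 1 + 1)]
      rcases Nat.lt_or_ge i (k + 1) with hik | hik
      · rw [Function.update_of_ne (by omega)]
        exact hf i (by omega)
      · obtain rfl : i = k + 1 := by omega
        rw [Function.update_self, hk]
        exact hbc

lemma icomp_iEmpty (J : Intervention S) : icomp (iEmpty S) J = J := by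
  funext W
  simp only [icomp, iEmpty]
  cases J W <;> rfl

namespace MaxConC

variable {Δ : Set (Form S)}

lemma int_iEmpty_mem_iff (hΔ : MaxConC Δ) (φ : Form S) : Form.int (iEmpty S) φ ∈ Δ ↔ φ ∈ Δ := by
  induction φ with
  | eq Y y => exact (hΔ.mem_iff_of_thmC_iffF (ThmC.aEmpty Y y)).symm
  | neg φ ih => rw [hΔ.mem_iff_of_thmC_iffF (ThmC.aNeg _ φ), hΔ.neg_mem_iff, hΔ.neg_mem_iff, ih]
  | conj φ ψ ihφ ihψ =>
    rw [hΔ.mem_iff_of_thmC_iffF (ThmC.aConj _ φ ψ), hΔ.conj_mem_iff, hΔ.conj_mem_iff, ihφ, ihψ]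
  | int J φ _ => rw [hΔ.mem_iff_of_thmC_iffF (ThmC.aIntInt _ J φ), icomp_iEmpty]

lemma chainConj_mem (hΔ : MaxConC Δ) {X : ℕ → S.Var} {k : ℕ}
    (h : ∀ i ≤ k, leadsTo (X i) (X (i + 1)) ∈ Δ) : chainConj X k ∈ Δ := by
  induction k with
  | zero => exact h 0 le_rfl
  | succ k ih => exact hΔ.conj_mem_iff.2 ⟨ih fun i hi => h i (by omega), h _ le_rfl⟩

end MaxConC

section Canonical

variable {Δ : Set (Form S)}

/-- The valuation that `Δ` predicts after the intervention `I`. -/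
noncomputable def canVal (Δ : Set (Form S)) (I : Intervention S) : Env S :=
  fun Y => Classical.epsilon fun y => Form.int I (Form.eq Y y) ∈ Δ

noncomputable def canF (Δ : Set (Form S)) : StructFuns S := fun V g => canVal Δ (fullI V g) V

noncomputable def canA (Δ : Set (Form S)) : Env S := canVal Δ (iEmpty S)

lemma canVal_mem (hΔ : MaxConC Δ) (I : Intervention S) (Y : S.Var) :
    Form.int I (Form.eq Y (canVal Δ I Y)) ∈ Δ := by
  obtain ⟨_, hmem, hψ⟩ := hΔ.exists_mem_of_bigOr_mem (hΔ.mem_of_thmC (ThmC.a2 I Y))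
  obtain ⟨y, -, rfl⟩ := List.mem_map.1 hmem
  exact Classical.epsilon_spec (p := fun y => Form.int I (Form.eq Y y) ∈ Δ) ⟨y, hψ⟩

lemma int_eq_mem_iff (hΔ : MaxConC Δ) {I : Intervention S} {Y : S.Var} {y : S.Val Y} :
    Form.int I (Form.eq Y y) ∈ Δ ↔ canVal Δ I Y = y := by
  refine ⟨fun h => by_contra fun hne => ?_, fun h => h ▸ canVal_mem hΔ I Y⟩
  have := hΔ.mem_of_impl_mem (hΔ.mem_of_thmC (ThmC.a1 I Y y _ (Ne.symm hne))) h
  exact hΔ.neg_mem_iff.1 this (canVal_mem hΔ I Y)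

lemma canVal_of_some (hΔ : MaxConC Δ) {I : Intervention S} {Y : S.Var} {y : S.Val Y}
    (h : I Y = some y) : canVal Δ I Y = y := by
  have := hΔ.mem_of_thmC (ThmC.a4 I Y y)
  rwa [iUpd, ← h, Function.update_eq_self, int_eq_mem_iff hΔ] at this

lemma canVal_of_exo (hΔ : MaxConC Δ) {I : Intervention S} {U : S.Var} (hU : S.exo U)
    (h : I U = none) : canVal Δ I U = canA Δ U :=
  (int_eq_mem_iff hΔ).1 ((hΔ.mem_iff_of_thmC_iffF (ThmC.a7 I U _ hU h)).1 (canVal_mem hΔ _ U))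

lemma canVal_iUpd (hΔ : MaxConC Δ) (I : Intervention S) (Y : S.Var) :
    canVal Δ (iUpd I Y (canVal Δ I Y)) = canVal Δ I :=
  funext fun Z => (int_eq_mem_iff hΔ).1 <| hΔ.mem_of_impl_mem (hΔ.mem_of_thmC (ThmC.a3 I Y Z _ _))
    (hΔ.conj_mem_iff.2 ⟨canVal_mem hΔ I Y, canVal_mem hΔ I Z⟩)

lemma canVal_fix_canVal_on (hΔ : MaxConC Δ) (I : Intervention S) (s : Finset S.Var) :
    canVal Δ (fun W => if W ∈ s then some (canVal Δ I W) else I W) = canVal Δ I := by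
  induction s using Finset.induction_on with
  | empty => simp
  | insert a s _ ih =>
    set J : Intervention S := fun W => if W ∈ s then some (canVal Δ I W) else I W
    have hJ : (fun W => if W ∈ insert a s then some (canVal Δ I W) else I W) =
        iUpd J a (canVal Δ J a) := by
      rw [ih]
      funext W
      by_cases hW : W = a
      · subst hW
        simp [iUpd]
      · simp [iUpd, J, hW]
    rw [hJ, canVal_iUpd hΔ, ih]

lemma canF_restrict_canVal (hΔ : MaxConC Δ) {I : Intervention S} {V : S.Var}
    (h : I V = none) : canF Δ V ((canVal Δ I).restrict V) = canVal Δ I V := by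
  have hfull : fullI V ((canVal Δ I).restrict V) =
      fun W => if W ∈ Finset.univ.erase V then some (canVal Δ I W) else I W := by
    funext W
    by_cases hW : W = V
    · subst hW
      simp [fullI, h]
    · simp [fullI, hW, Env.restrict]
  rw [canF, hfull, canVal_fix_canVal_on hΔ]

lemma intStep_canVal (hΔ : MaxConC Δ) (I : Intervention S) :
    intStep (canF Δ) (canA Δ) I (canVal Δ I) = canVal Δ I := by
  funext X
  cases hI : I X with
  | some x => simp [intStep, hI, canVal_of_some hΔ hI]
  | none =>
    by_cases hX : S.exo X
    · simp [intStep, hI, hX, canVal_of_exo hΔ hX hI]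
    · simp [intStep, hI, hX, canF_restrict_canVal hΔ hI]

lemma complies_canA (hΔ : MaxConC Δ) : Complies (canF Δ) (canA Δ) :=
  intStep_iEmpty_eq_self_iff.1 (intStep_canVal hΔ _)

lemma leadsTo_mem_of_dirAff_canF (hΔ : MaxConC Δ) {X V : S.Var} (h : DirAff (canF Δ) X V) :
    leadsTo X V ∈ Δ := by
  obtain ⟨-, hXV, g, x₁, x₂, hx, hne⟩ := h
  simp only [canF, ← ltInt_eq_fullI] at hne
  set g' : ∀ W : {W : S.Var // W ≠ X ∧ W ≠ V}, S.Val W.1 := fun W => g ⟨W.1, W.2.2⟩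
  refine hΔ.bigOr_mem_of_mem ?_ (hΔ.conj_mem_iff.2
    ⟨canVal_mem hΔ (ltInt X V g' x₁) V, canVal_mem hΔ (ltInt X V g' x₂) V⟩)
  simp only [List.mem_map, Finset.mem_toList, Finset.mem_filter, Finset.mem_univ, true_and]
  exact ⟨⟨_, (x₁, x₂), (_, _)⟩, ⟨hx, hne⟩, rfl⟩

/-- A causal cycle of `canF Δ` would put both a chain of `⇝` and its closing `⇝` into `Δ`,
against A6. -/
lemma recursiveF_canF (hΔ : MaxConC Δ) : RecursiveF (canF Δ) := by
  intro a b hab hba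
  obtain ⟨c, hac, hca⟩ := Relation.TransGen.tail'_iff.1 (hab.trans hba)
  rcases Relation.reflTransGen_iff_eq_or_transGen.1 hac with rfl | hac
  · exact hca.ne rfl
  obtain ⟨k, X, rfl, rfl, hX⟩ := hac.exists_seq
  have hchain := hΔ.chainConj_mem fun i hi => leadsTo_mem_of_dirAff_canF hΔ (hX i hi)
  have hnot := hΔ.mem_of_impl_mem
    (hΔ.mem_of_thmC (ThmC.a6 X k (fun i hi => (hX i hi).ne) hca.ne)) hchain
  exact hΔ.neg_mem_iff.1 hnot (leadsTo_mem_of_dirAff_canF hΔ hca)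

lemma satC_canonical_int_iff (hΔ : MaxConC Δ) (φ : Form S) (I : Intervention S) :
    SatC φ (intF (canF Δ) I) (intVal (canF Δ) (canA Δ) I) ↔ Form.int I φ ∈ Δ := by
  have hF := recursiveF_canF hΔ
  induction φ generalizing I with
  | eq Y y =>
    rw [intVal_eq_of_intStep_eq_self hF (intStep_canVal hΔ I), int_eq_mem_iff hΔ]
    rfl
  | neg φ ih =>
    rw [hΔ.mem_iff_of_thmC_iffF (ThmC.aNeg I φ), hΔ.neg_mem_iff]
    exact (ih I).not
  | conj φ ψ ihφ ihψ =>
    rw [hΔ.mem_iff_of_thmC_iffF (ThmC.aConj I φ ψ), hΔ.conj_mem_iff]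
    exact (ihφ I).and (ihψ I)
  | int J φ ih =>
    change SatC φ (intF (intF (canF Δ) I) J)
      (intVal (intF (canF Δ) I) (intVal (canF Δ) (canA Δ) I) J) ↔ _
    rw [intF_icomp, intVal_intF hF, hΔ.mem_iff_of_thmC_iffF (ThmC.aIntInt I J φ)]
    exact ih (icomp I J)

lemma satC_canonical_iff (hΔ : MaxConC Δ) (φ : Form S) :
    SatC φ (canF Δ) (canA Δ) ↔ φ ∈ Δ := by
  have h := satC_canonical_int_iff hΔ φ (iEmpty S)
  rwa [intVal_iEmpty (recursiveF_canF hΔ) (complies_canA hΔ), hΔ.int_iEmpty_mem_iff] at h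

end Canonical

/-- Theorem: the proof system L_C is sound and strongly complete for the language
L_C with respect to recursive causal models. -/
theorem LC_sound_and_strongly_complete (S : Sig) (Γ : Set (Form S)) (φ : Form S) :
    ProvC Γ φ ↔
      (∀ (F : StructFuns S) (A : Env S), RecursiveF F → Complies F A →
        (∀ ψ ∈ Γ, SatC ψ F A) → SatC φ F A) := by
  refine ⟨fun h F A hF hA hΓ => h.satC hF hA hΓ, fun hsem => by_contra fun hφ => ?_⟩
  obtain ⟨Δ, hΓΔ, hΔ⟩ := exists_maxConC_superset (conC_insert_neg hφ)
  have hsat : ∀ ψ ∈ insert (Form.neg φ) Γ, SatC ψ (canF Δ) (canA Δ) :=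
    fun ψ hψ => (satC_canonical_iff hΔ ψ).2 (hΓΔ hψ)
  exact hsat _ (Set.mem_insert _ _) <| hsem _ _ (recursiveF_canF hΔ) (complies_canA hΔ)
    fun ψ hψ => hsat ψ (Set.mem_insert_of_mem _ hψ)
end

section
/- Uniqueness of the intervened valuation: let F be a recursive family of structural functions, A a valuation, and [X⃗:=x⃗] an assignment, and let F′ be the intervened family of structural functions. Then there is exactly one valuation A′ such that: A′(Y) = x_i whenever Y is exogenous and Y = X_i ∈ X⃗; A′(Y) = A(Y) whenever Y is exogenous and Y ∉ X⃗; and A′(Y) = F′_Y applied to the values of all other variables under A′ whenever Y is endogenous. -/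
open Classical

variable {S : Sig}

lemma not_dirAff_update {F : StructFuns S} {X V : S.Var} (hV : ¬ S.exo V)
    (hnd : ¬ DirAff F X V) (hne : X ≠ V) (g : Others S V) (x₁ x₂ : S.Val X) :
    F V (Function.update g ⟨X, hne⟩ x₁) = F V (Function.update g ⟨X, hne⟩ x₂) := by
  by_cases hx : x₁ = x₂
  · subst hx; rfl
  · by_contra hF
    exact hnd ⟨hV, hne, g, x₁, x₂, hx, hF⟩

/-- The value of a structural function only depends on directly affecting variables. -/
lemma dirAff_depends (F : StructFuns S) (V : S.Var) (hV : ¬ S.exo V) :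
    ∀ (n : ℕ) (g h : Others S V),
      (Finset.univ.filter (fun X => g X ≠ h X)).card ≤ n →
      (∀ X : {X : S.Var // X ≠ V}, DirAff F X.val V → g X = h X) →
      F V g = F V h := by
  intro n
  induction n with
  | zero =>
    intro g h hcard _
    have hempty : (Finset.univ.filter (fun X => g X ≠ h X)) = ∅ :=
      Finset.card_eq_zero.mp (Nat.le_zero.mp hcard)
    have : ∀ X, g X = h X := by
      intro X
      by_contra hx
      have : X ∈ Finset.univ.filter (fun X => g X ≠ h X) := by
        simp [hx]
      simp [hempty] at this
    exact congrArg (F V) (funext this)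
  | succ n ih =>
    intro g h hcard hagree
    by_cases hex : ∃ X, g X ≠ h X
    · obtain ⟨X, hX⟩ := hex
      have hnd : ¬ DirAff F X.val V := fun hd => hX (hagree X hd)
      set g' : Others S V := Function.update g X (h X) with hg'
      have step : F V g = F V g' := by
        have h1 : Function.update g X (g X) = g := Function.update_eq_self X g
        calc F V g = F V (Function.update g X (g X)) := by rw [h1]
          _ = F V (Function.update g X (h X)) := by
              have := not_dirAff_update (F := F) hV hnd X.prop g (g X) (h X)
              simpa using this
      have hmem : X ∈ Finset.univ.filter (fun Y => g Y ≠ h Y) := by simp [hX]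
      have hsub : (Finset.univ.filter (fun Y => g' Y ≠ h Y)) ⊆
          (Finset.univ.filter (fun Y => g Y ≠ h Y)).erase X := by
        intro Y hY
        simp only [Finset.mem_filter, Finset.mem_univ, true_and] at hY
        have hYX : Y ≠ X := by
          intro hEq; subst hEq
          simp [hg', Function.update_self] at hY
        rw [Finset.mem_erase]
        refine ⟨hYX, ?_⟩
        simp only [Finset.mem_filter, Finset.mem_univ, true_and]
        simpa [hg', Function.update_of_ne hYX] using hY
      have hcard' : (Finset.univ.filter (fun Y => g' Y ≠ h Y)).card ≤ n := by
        have := Finset.card_le_card hsub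
        have h2 : ((Finset.univ.filter (fun Y => g Y ≠ h Y)).erase X).card
            = (Finset.univ.filter (fun Y => g Y ≠ h Y)).card - 1 :=
          Finset.card_erase_of_mem hmem
        omega
      have hagree' : ∀ Y : {X : S.Var // X ≠ V}, DirAff F Y.val V → g' Y = h Y := by
        intro Y hd
        by_cases hYX : Y = X
        · subst hYX; simp [hg']
        · rw [hg', Function.update_of_ne hYX]; exact hagree Y hd
      rw [step]
      exact ih g' h hcard' hagree'
    · push_neg at hex
      exact congrArg (F V) (funext hex)

lemma dirAff_intF {F : StructFuns S} {I : Intervention S} {X V : S.Var}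
    (h : DirAff (intF F I) X V) : DirAff F X V := by
  obtain ⟨hV, hne, g, x₁, x₂, hx, hF⟩ := h
  cases hIV : I V with
  | some v => simp [intF, hIV] at hF
  | none =>
    refine ⟨hV, hne, g, x₁, x₂, hx, ?_⟩
    simpa [intF, hIV] using hF

lemma wf_dirAff_intF {F : StructFuns S} (I : Intervention S) (hRec : RecursiveF F) :
    WellFounded (DirAff (intF F I)) := by
  have hirr : ∀ a, ¬ Relation.TransGen (DirAff F) a a := fun a h => hRec a a h h
  have htwf : WellFounded (Relation.TransGen (DirAff F)) := by
    have : IsIrrefl S.Var (Relation.TransGen (DirAff F)) := ⟨hirr⟩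
    have : IsTrans S.Var (Relation.TransGen (DirAff F)) :=
      ⟨fun _ _ _ => Relation.TransGen.trans⟩
    exact Finite.wellFounded_of_trans_of_irrefl _
  exact Subrelation.wf (fun h => Relation.TransGen.single (dirAff_intF h)) htwf

/-- The solution, constructed by well-founded recursion. -/
noncomputable def solF (F : StructFuns S) (A : Env S) (I : Intervention S)
    (wf : WellFounded (DirAff (intF F I))) : Env S :=
  wf.fix (C := fun V => S.Val V) (fun V rec =>
    if S.exo V then
      match I V with
      | some v => v
      | none => A V
    else intF F I V (fun X =>
      if hr : DirAff (intF F I) X.val V then rec X.val hr else A X.val))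

lemma solF_eq (F : StructFuns S) (A : Env S) (I : Intervention S)
    (wf : WellFounded (DirAff (intF F I))) (V : S.Var) :
    solF F A I wf V =
      if S.exo V then
        match I V with
        | some v => v
        | none => A V
      else intF F I V (fun X =>
        if DirAff (intF F I) X.val V then solF F A I wf X.val else A X.val) := by
  rw [solF, WellFounded.fix_eq]
  simp only [dite_eq_ite]

/-- Theorem: uniqueness of the intervened valuation.  If `F` is recursive then,
for any valuation `A` and any assignment `I`, there is exactly one valuation
satisfying the three defining conditions of the intervened valuation. -/
theorem intervened_valuation_unique
    (S : Sig) (F : StructFuns S) (A : Env S) (I : Intervention S)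
    (hRec : RecursiveF F) :
    ∃! A' : Env S, IntervenedVal F A I A' := by
  have wf := wf_dirAff_intF (F := F) I hRec
  set B := solF F A I wf with hB
  refine ⟨B, ⟨?_, ?_, ?_⟩, ?_⟩
  · intro X hX v hIv
    rw [hB, solF_eq, if_pos hX, hIv]
  · intro X hX hIn
    rw [hB, solF_eq, if_pos hX, hIn]
  · intro V hV
    rw [hB, solF_eq, if_neg hV]
    refine dirAff_depends (intF F I) V hV
      (Finset.univ.filter (fun X =>
        (if DirAff (intF F I) X.val V then solF F A I wf X.val else A X.val)
          ≠ (solF F A I wf).restrict V X)).card _ _ le_rfl ?_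
    intro X hd
    simp only [if_pos hd]
    rfl
  · -- uniqueness
    intro A' ⟨h1, h2, h3⟩
    funext V
    induction V using wf.induction with
    | _ V ih =>
      by_cases hV : S.exo V
      · cases hIV : I V with
        | some v =>
          rw [h1 V hV v hIV, hB, solF_eq, if_pos hV, hIV]
        | none =>
          rw [h2 V hV hIV, hB, solF_eq, if_pos hV, hIV]
      · rw [h3 V hV]
        have hBV : B V = intF F I V (B.restrict V) := by
          rw [hB, solF_eq, if_neg hV]
          refine dirAff_depends (intF F I) V hV
            (Finset.univ.filter (fun X =>
              (if DirAff (intF F I) X.val V then solF F A I wf X.val else A X.val)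
                ≠ (solF F A I wf).restrict V X)).card _ _ le_rfl ?_
          intro X hd
          simp only [if_pos hd]
          rfl
        rw [hBV]
        refine dirAff_depends (intF F I) V hV
          (Finset.univ.filter (fun X =>
            A'.restrict V X ≠ B.restrict V X)).card _ _ le_rfl ?_
        intro X hd
        exact ih X.val hd
end

section
/- The proof system L′_C (propositional tautologies, modus ponens, and axioms A1–A7) is strongly complete for the language L′_C with respect to recursive causal models: for every set Γ ∪ {γ} of L′_C formulas, if every recursive causal model satisfying all formulas of Γ satisfies γ, then Γ proves γ in L′_C. -/
open Classical

variable {S : Sig}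

/-- The proof system L′_C: propositional tautologies, modus ponens, and the
axiom schemes A1–A7. -/
inductive ThmC' : Form S → Prop where
  | taut : ∀ {φ : Form S}, Tauto φ → ThmC' φ
  | mp : ∀ {φ ψ : Form S}, ThmC' (Form.impl φ ψ) → ThmC' φ → ThmC' ψ
  | a1 : ∀ (I : Intervention S) (Y : S.Var) (y y' : S.Val Y), y ≠ y' →
      ThmC' (Form.impl (Form.int I (Form.eq Y y)) (Form.neg (Form.int I (Form.eq Y y'))))
  | a2 : ∀ (I : Intervention S) (Y : S.Var),
      ThmC' (bigOr (((Finset.univ : Finset (S.Val Y)).toList).map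
        (fun y => Form.int I (Form.eq Y y))))
  | a3 : ∀ (I : Intervention S) (Y Z : S.Var) (y : S.Val Y) (z : S.Val Z),
      ThmC' (Form.impl (Form.conj (Form.int I (Form.eq Y y)) (Form.int I (Form.eq Z z)))
        (Form.int (iUpd I Y y) (Form.eq Z z)))
  | a4 : ∀ (I : Intervention S) (Y : S.Var) (y : S.Val Y),
      ThmC' (Form.int (iUpd I Y y) (Form.eq Y y))
  | a5 : ∀ (I : Intervention S) (Y Z : S.Var) (y : S.Val Y) (z : S.Val Z), Y ≠ Z →
      ThmC' (Form.impl
        (Form.conj (Form.int (iUpd I Y y) (Form.eq Z z)) (Form.int (iUpd I Z z) (Form.eq Y y)))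
        (Form.int I (Form.eq Z z)))
  | a6 : ∀ (X : ℕ → S.Var) (k : ℕ),
      (∀ i : ℕ, i ≤ k → X i ≠ X (i + 1)) → X (k + 1) ≠ X 0 →
      ThmC' (Form.impl (chainConj X k) (Form.neg (leadsTo (X (k + 1)) (X 0))))
  | a7 : ∀ (I : Intervention S) (U : S.Var) (u : S.Val U), S.exo U → I U = none →
      ThmC' (Form.iffF (Form.int (iEmpty S) (Form.eq U u)) (Form.int I (Form.eq U u)))

/-- Strong derivability from a set of premises in L′_C. -/
def ProvC' (Γ : Set (Form S)) (φ : Form S) : Prop :=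
  ∃ l : List (Form S), (∀ ψ ∈ l, ψ ∈ Γ) ∧ ThmC' (impsFrom l φ)

/-- The language L′_C: Boolean combinations of formulas `[X⃗:=x⃗]Y=y`. -/
inductive IsC' : Form S → Prop where
  | intEq : ∀ (I : Intervention S) (Y : S.Var) (y : S.Val Y),
      IsC' (Form.int I (Form.eq Y y))
  | neg : ∀ {φ : Form S}, IsC' φ → IsC' (Form.neg φ)
  | conj : ∀ {φ ψ : Form S}, IsC' φ → IsC' ψ → IsC' (Form.conj φ ψ)

/-! Under a Boolean valuation the truth value of an L′_C formula depends only on the finitely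
many atoms `[X⃗:=x⃗]Y=y`. Strong completeness therefore reduces to realizing, by a recursive causal
model, every atom assignment `β` that validates all axiom instances: finitely many axiom
instances and premises then refute every other assignment, and the implication from them to `γ`
is a tautology.

In the canonical model of such a `β`, A1–A2 make `β` pick one value of each variable under each
intervention `I`, a valuation `val I`. The structural function of `V` at `g` is the value of `V`
under the intervention fixing all other variables to `g`. By A3, fixing variables to their own
values under `I` does not change `val I`, so `val I` complies with the intervened functions;
A4 and A7 take care of intervened and exogenous variables, and A6 forbids causal cycles, which
makes the model recursive and `val I` its unique intervened valuation. -/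

structure IsValuation (v : Form S → Bool) : Prop where
  neg : ∀ ψ : Form S, v (Form.neg ψ) = !(v ψ)
  conj : ∀ ψ χ : Form S, v (Form.conj ψ χ) = (v ψ && v χ)

lemma tauto_of_isValuation {φ : Form S} (h : ∀ v, IsValuation v → v φ = true) : Tauto φ :=
  fun v hneg hconj => h v ⟨hneg, hconj⟩

namespace IsValuation

variable {v : Form S → Bool} (hv : IsValuation v)
include hv

lemma impl (φ ψ : Form S) : v (Form.impl φ ψ) = true ↔ (v φ = true → v ψ = true) := by
  simp only [Form.impl, hv.neg, hv.conj]
  cases v φ <;> cases v ψ <;> simp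

lemma orF (φ ψ : Form S) : v (Form.orF φ ψ) = true ↔ (v φ = true ∨ v ψ = true) := by
  simp only [Form.orF, hv.neg, hv.conj]
  cases v φ <;> cases v ψ <;> simp

lemma iffF (φ ψ : Form S) : v (Form.iffF φ ψ) = true ↔ (v φ = true ↔ v ψ = true) := by
  simp only [Form.iffF, hv.conj, Bool.and_eq_true, hv.impl]
  exact iff_iff_implies_and_implies.symm

lemma botF : v (botF S) = false := by
  simp [_root_.botF, hv.conj, hv.neg]

lemma topF : v (topF S) = true := by
  simp [_root_.topF, hv.neg, hv.botF]

lemma foldl_orF (l : List (Form S)) (φ : Form S) :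
    v (l.foldl Form.orF φ) = true ↔ v φ = true ∨ ∃ ψ ∈ l, v ψ = true := by
  induction l generalizing φ with
  | nil => simp
  | cons ψ l ih => simp [ih, hv.orF, or_assoc]

lemma bigOr (l : List (Form S)) : v (bigOr l) = true ↔ ∃ ψ ∈ l, v ψ = true := by
  cases l with
  | nil => simp [_root_.bigOr, hv.botF]
  | cons φ l => simp [_root_.bigOr, hv.foldl_orF]

lemma impsFrom (l : List (Form S)) (φ : Form S) :
    v (impsFrom l φ) = true ↔ ((∀ ψ ∈ l, v ψ = true) → v φ = true) := by
  induction l with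
  | nil => simp [_root_.impsFrom]
  | cons ψ l ih => simp [_root_.impsFrom, hv.impl, ih, and_imp]

lemma leadsTo (X V : S.Var) :
    v (leadsTo X V) = true ↔
      ∃ (z : ∀ W : {W : S.Var // W ≠ X ∧ W ≠ V}, S.Val W.val) (x₁ x₂ : S.Val X)
        (v₁ v₂ : S.Val V), x₁ ≠ x₂ ∧ v₁ ≠ v₂ ∧
          v (Form.int (ltInt X V z x₁) (Form.eq V v₁)) = true ∧
          v (Form.int (ltInt X V z x₂) (Form.eq V v₂)) = true := by
  simp [_root_.leadsTo, hv.bigOr, hv.conj, and_assoc]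

lemma chainConj (X : ℕ → S.Var) (k : ℕ) :
    v (chainConj X k) = true ↔ ∀ i ≤ k, v (_root_.leadsTo (X i) (X (i + 1))) = true := by
  induction k with
  | zero => simp [_root_.chainConj]
  | succ k ih => simp [_root_.chainConj, hv.conj, ih, Nat.le_succ_iff, or_imp, forall_and]

end IsValuation

abbrev AtomAssignment (S : Sig) : Type := Intervention S → ∀ Y : S.Var, S.Val Y → Bool

/-- The valuation with atom values `β`; it gives the junk value `true` to formulas that are
neither atoms nor Boolean combinations. -/
def evalAtoms (β : AtomAssignment S) : Form S → Bool
  | Form.eq _ _ => true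
  | Form.neg φ => !(evalAtoms β φ)
  | Form.conj φ ψ => evalAtoms β φ && evalAtoms β ψ
  | Form.int I (Form.eq Y y) => β I Y y
  | Form.int _ _ => true

lemma isValuation_evalAtoms (β : AtomAssignment S) : IsValuation (evalAtoms β) :=
  ⟨fun _ => rfl, fun _ _ => rfl⟩

def atomsOf (v : Form S → Bool) : AtomAssignment S := fun I Y y => v (Form.int I (Form.eq Y y))

def AtomDetermined (φ : Form S) : Prop :=
  ∀ v, IsValuation v → v φ = evalAtoms (atomsOf v) φ

namespace AtomDetermined

lemma intEq (I : Intervention S) (Y : S.Var) (y : S.Val Y) :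
    AtomDetermined (Form.int I (Form.eq Y y)) :=
  fun _ _ => rfl

lemma neg {φ : Form S} (h : AtomDetermined φ) : AtomDetermined (Form.neg φ) :=
  fun v hv => by rw [hv.neg, h v hv]; rfl

lemma conj {φ ψ : Form S} (hφ : AtomDetermined φ) (hψ : AtomDetermined ψ) :
    AtomDetermined (Form.conj φ ψ) :=
  fun v hv => by rw [hv.conj, hφ v hv, hψ v hv]; rfl

lemma impl {φ ψ : Form S} (hφ : AtomDetermined φ) (hψ : AtomDetermined ψ) :
    AtomDetermined (Form.impl φ ψ) :=
  (hφ.conj hψ.neg).neg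

lemma iffF {φ ψ : Form S} (hφ : AtomDetermined φ) (hψ : AtomDetermined ψ) :
    AtomDetermined (Form.iffF φ ψ) :=
  (hφ.impl hψ).conj (hψ.impl hφ)

lemma topF : AtomDetermined (topF S) :=
  fun v hv => by rw [hv.topF, (isValuation_evalAtoms _).topF]

lemma bigOr {l : List (Form S)} (h : ∀ φ ∈ l, AtomDetermined φ) : AtomDetermined (bigOr l) :=
  fun v hv => Bool.eq_iff_iff.2 <| by
    rw [hv.bigOr, (isValuation_evalAtoms _).bigOr]
    exact exists_congr fun φ => and_congr_right fun hφ => by rw [h φ hφ v hv]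

lemma leadsTo (X V : S.Var) : AtomDetermined (leadsTo X V) :=
  bigOr fun φ hφ => by
    obtain ⟨_, -, rfl⟩ := List.mem_map.1 hφ
    exact (intEq _ _ _).conj (intEq _ _ _)

lemma chainConj (X : ℕ → S.Var) (k : ℕ) : AtomDetermined (chainConj X k) := by
  induction k with
  | zero => exact leadsTo _ _
  | succ k ih => exact ih.conj (leadsTo _ _)

end AtomDetermined

lemma IsC'.atomDetermined {φ : Form S} (h : IsC' φ) : AtomDetermined φ := by
  induction h with
  | intEq I Y y => exact .intEq I Y y
  | neg _ ih => exact ih.neg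
  | conj _ _ ih₁ ih₂ => exact ih₁.conj ih₂

def Consistent (β : AtomAssignment S) : Prop :=
  ∀ φ : Form S, ThmC' φ → AtomDetermined φ → evalAtoms β φ = true

lemma ProvC'.of_thmC'_impsFrom_append {Γ : Set (Form S)} {Θ L : List (Form S)} {φ : Form S}
    (hΘ : ∀ θ ∈ Θ, ThmC' θ) (hL : ∀ ψ ∈ L, ψ ∈ Γ) (h : ThmC' (impsFrom (Θ ++ L) φ)) :
    ProvC' Γ φ := by
  refine ⟨L, hL, ?_⟩
  induction Θ with
  | nil => exact h
  | cons θ Θ ih =>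
    exact ih (fun θ' hθ' => hΘ θ' (List.mem_cons_of_mem θ hθ'))
      (ThmC'.mp h (hΘ θ List.mem_cons_self))

lemma provC'_of_consistent {Γ : Set (Form S)} {γ : Form S}
    (hΓ : ∀ ψ ∈ Γ, AtomDetermined ψ) (hγ : AtomDetermined γ)
    (h : ∀ β, Consistent β → (∀ ψ ∈ Γ, evalAtoms β ψ = true) → evalAtoms β γ = true) :
    ProvC' Γ γ := by
  have refutation : ∀ β : AtomAssignment S, ∃ θ, (ThmC' θ ∨ θ ∈ Γ) ∧ AtomDetermined θ ∧
      (evalAtoms β θ = true → evalAtoms β γ = true) := by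
    intro β
    by_cases hβ : Consistent β
    · by_cases hβΓ : ∀ ψ ∈ Γ, evalAtoms β ψ = true
      · exact ⟨topF S, .inl (.taut (tauto_of_isValuation fun v hv => hv.topF)), .topF,
          fun _ => h β hβ hβΓ⟩
      · push Not at hβΓ
        obtain ⟨ψ, hψ, hfalse⟩ := hβΓ
        exact ⟨ψ, .inr hψ, hΓ ψ hψ, by simp [hfalse]⟩
    · simp only [Consistent, not_forall] at hβ
      obtain ⟨θ, hθ, hdet, hfalse⟩ := hβ
      exact ⟨θ, .inl hθ, hdet, by simp [hfalse]⟩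
  choose θ hθ using refutation
  set P := (Finset.univ : Finset (AtomAssignment S)).toList.map θ
  refine ProvC'.of_thmC'_impsFrom_append (Θ := P.filter (· ∉ Γ)) (L := P.filter (· ∈ Γ))
    ?_ ?_ (.taut (tauto_of_isValuation fun v hv => ?_))
  · intro φ hφ
    obtain ⟨hφP, hφΓ⟩ := List.mem_filter.1 hφ
    obtain ⟨β, -, rfl⟩ := List.mem_map.1 hφP
    exact (hθ β).1.resolve_right (by simpa using hφΓ)
  · intro φ hφ
    simpa using (List.mem_filter.1 hφ).2
  · rw [hv.impsFrom]
    intro hP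
    obtain ⟨-, hdet, himp⟩ := hθ (atomsOf v)
    rw [hγ v hv]
    refine himp (hdet v hv ▸ hP _ ?_)
    by_cases hmem : θ (atomsOf v) ∈ Γ <;> simp [P, hmem]

lemma Relation.TransGen.exists_path {α : Type*} {r : α → α → Prop} {a b : α}
    (h : Relation.TransGen r a b) :
    ∃ (n : ℕ) (f : ℕ → α), f 0 = a ∧ f (n + 1) = b ∧ ∀ i ≤ n, r (f i) (f (i + 1)) := by
  induction h using Relation.TransGen.head_induction_on with
  | @single a hab => exact ⟨0, fun | 0 => a | _ => b, rfl, rfl, by simpa using hab⟩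
  | @head a c hac _ ih =>
    obtain ⟨n, f, hf0, hfn, hf⟩ := ih
    refine ⟨n + 1, fun | 0 => a | i + 1 => f i, rfl, hfn, ?_⟩
    rintro (_ | i) hi
    · simpa [hf0] using hac
    · exact hf i (by omega)

lemma apply_update_eq_of_not_dirAff {F : StructFuns S} {W V : S.Var} (hV : ¬ S.exo V)
    (h : ¬ DirAff F W V) (hWV : W ≠ V) (g : Others S V) (a b : S.Val W) :
    F V (Function.update g ⟨W, hWV⟩ a) = F V (Function.update g ⟨W, hWV⟩ b) := by
  by_contra hne
  exact h ⟨hV, hWV, g, a, b, fun hab => hne (by rw [hab]), hne⟩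

lemma apply_eq_of_eq_on_dirAff {F : StructFuns S} {V : S.Var} (hV : ¬ S.exo V)
    {g₁ g₂ : Others S V} (h : ∀ W : {X : S.Var // X ≠ V}, DirAff F W V → g₁ W = g₂ W) :
    F V g₁ = F V g₂ := by
  -- turn `g₁` into `g₂` one coordinate at a time
  suffices ∀ s : Finset {X : S.Var // X ≠ V}, ∀ g : Others S V, (∀ W ∉ s, g W = g₂ W) →
      (∀ W : {X : S.Var // X ≠ V}, DirAff F W V → g W = g₂ W) → F V g = F V g₂ from
    this Finset.univ g₁ (by simp) h
  intro s
  induction s using Finset.induction_on with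
  | empty => intro g hg _; rw [funext fun W => hg W (Finset.notMem_empty W)]
  | insert W s hW ih =>
    intro g hg hdir
    have hstep : F V g = F V (Function.update g W (g₂ W)) := by
      by_cases hd : DirAff F W V
      · rw [← hdir W hd, Function.update_eq_self]
      · conv_lhs => rw [← Function.update_eq_self W g]
        exact apply_update_eq_of_not_dirAff hV hd W.2 g _ _
    rw [hstep]
    refine ih _ (fun X hX => ?_) (fun X hX => ?_) <;>
      rcases eq_or_ne X W with rfl | hXW <;> simp_all [Function.update_of_ne]

lemma RecursiveF.wellFounded {F : StructFuns S} (hF : RecursiveF F) :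
    WellFounded (Relation.TransGen (DirAff F)) :=
  have : IsTrans S.Var (Relation.TransGen (DirAff F)) := ⟨fun _ _ _ => .trans⟩
  have : Std.Irrefl (Relation.TransGen (DirAff F)) := ⟨fun a h => hF a a h h⟩
  Finite.wellFounded_of_trans_of_irrefl _

lemma IntervenedVal.unique {F : StructFuns S} (hF : RecursiveF F) {A A₁ A₂ : Env S}
    {I : Intervention S} (h₁ : IntervenedVal F A I A₁) (h₂ : IntervenedVal F A I A₂) :
    A₁ = A₂ := by
  funext V
  induction V using hF.wellFounded.induction with
  | _ V ih =>
    by_cases hexo : S.exo V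
    · cases hIV : I V with
      | none => rw [h₁.2.1 V hexo hIV, h₂.2.1 V hexo hIV]
      | some v => rw [h₁.1 V hexo v hIV, h₂.1 V hexo v hIV]
    · rw [h₁.2.2 V hexo, h₂.2.2 V hexo]
      cases hIV : I V with
      | some v => simp [intF, hIV]
      | none =>
        simp only [intF, hIV, Option.getD_none]
        exact apply_eq_of_eq_on_dirAff hexo fun W hW => ih W (.single hW)

def fixOthers (V : S.Var) (g : Others S V) : Intervention S := fun W =>
  if h : W = V then none else some (g ⟨W, h⟩)

namespace Consistent

variable {β : AtomAssignment S} (hβ : Consistent β)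
include hβ

lemma existsUnique_atom (I : Intervention S) (Y : S.Var) : ∃! y : S.Val Y, β I Y y = true := by
  have hA2 := hβ _ (.a2 I Y) <| .bigOr fun φ hφ => by
    obtain ⟨y, -, rfl⟩ := List.mem_map.1 hφ
    exact .intEq I Y y
  obtain ⟨_, hmem, hy⟩ := ((isValuation_evalAtoms β).bigOr _).1 hA2
  obtain ⟨y, -, rfl⟩ := List.mem_map.1 hmem
  refine ⟨y, hy, fun y' hy' => by_contra fun hne => ?_⟩
  have hA1 := hβ _ (.a1 I Y y' y hne) ((AtomDetermined.intEq _ _ _).impl (.neg (.intEq _ _ _)))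
  have := ((isValuation_evalAtoms β).impl _ _).1 hA1 hy'
  simp_all [evalAtoms]

noncomputable def val (I : Intervention S) : Env S :=
  fun Y => (hβ.existsUnique_atom I Y).exists.choose

lemma atom_val (I : Intervention S) (Y : S.Var) : β I Y (hβ.val I Y) = true :=
  (hβ.existsUnique_atom I Y).exists.choose_spec

lemma val_eq_iff {I : Intervention S} {Y : S.Var} {y : S.Val Y} :
    hβ.val I Y = y ↔ β I Y y = true :=
  ⟨fun h => h ▸ hβ.atom_val I Y, (hβ.existsUnique_atom I Y).unique (hβ.atom_val I Y)⟩

lemma val_iUpd_self (I : Intervention S) (Y : S.Var) (y : S.Val Y) :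
    hβ.val (iUpd I Y y) Y = y :=
  hβ.val_eq_iff.2 (hβ _ (.a4 I Y y) (.intEq _ _ _))

lemma val_of_some {I : Intervention S} {Y : S.Var} {y : S.Val Y} (h : I Y = some y) :
    hβ.val I Y = y := by
  have hI : iUpd I Y y = I := by rw [iUpd, ← h, Function.update_eq_self]
  simpa [hI] using hβ.val_iUpd_self I Y y

lemma val_iUpd_val (I : Intervention S) (W : S.Var) :
    hβ.val (iUpd I W (hβ.val I W)) = hβ.val I := by
  funext Z
  have hA3 := hβ _ (.a3 I W Z (hβ.val I W) (hβ.val I Z))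
    (((AtomDetermined.intEq _ _ _).conj (.intEq _ _ _)).impl (.intEq _ _ _))
  exact hβ.val_eq_iff.2 <|
    ((isValuation_evalAtoms β).impl _ _).1 hA3 (by simp [evalAtoms, hβ.atom_val])

lemma val_override (I : Intervention S) (s : Finset S.Var) :
    hβ.val (fun Z => if Z ∈ s then some (hβ.val I Z) else I Z) = hβ.val I := by
  induction s using Finset.induction_on with
  | empty => simp
  | insert W s hW ih =>
    set K : Intervention S := fun Z => if Z ∈ s then some (hβ.val I Z) else I Z
    have hK : (fun Z => if Z ∈ insert W s then some (hβ.val I Z) else I Z) =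
        iUpd K W (hβ.val K W) := by
      rw [ih]
      funext Z
      rcases eq_or_ne Z W with rfl | hZW <;> simp [iUpd, K, *]
    rw [hK, hβ.val_iUpd_val, ih]

lemma val_fixOthers {I : Intervention S} {V : S.Var} (hIV : I V = none) :
    hβ.val (fixOthers V ((hβ.val I).restrict V)) = hβ.val I := by
  convert hβ.val_override I (Finset.univ.erase V) using 2
  funext Z
  by_cases hZV : Z = V
  · subst hZV
    simp [fixOthers, hIV]
  · simp [fixOthers, hZV, Env.restrict]

noncomputable def structFuns : StructFuns S := fun V g => hβ.val (fixOthers V g) V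

noncomputable def env : Env S := hβ.val (iEmpty S)

lemma intervenedVal (I : Intervention S) :
    IntervenedVal hβ.structFuns hβ.env I (hβ.val I) := by
  refine ⟨fun X _ x hIX => hβ.val_of_some hIX, fun X hexo hIX => ?_, fun V _ => ?_⟩
  · have hA7 := hβ _ (.a7 I X (hβ.val I X) hexo hIX)
      ((AtomDetermined.intEq _ _ _).iffF (.intEq _ _ _))
    have hval := ((isValuation_evalAtoms β).iffF _ _).1 hA7 |>.2 (hβ.atom_val I X)
    exact (hβ.val_eq_iff.2 hval).symm
  · cases hIV : I V with
    | some v => simp [intF, hIV, hβ.val_of_some hIV]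
    | none =>
      simp only [intF, hIV, Option.getD_none]
      exact (congrFun (hβ.val_fixOthers hIV) V).symm

lemma complies : Complies hβ.structFuns hβ.env :=
  (hβ.intervenedVal (iEmpty S)).2.2

lemma leadsTo_of_dirAff {X V : S.Var} (h : DirAff hβ.structFuns X V) :
    evalAtoms β (leadsTo X V) = true := by
  obtain ⟨-, hXV, g, x₁, x₂, hx, hne⟩ := h
  let z : ∀ W : {W : S.Var // W ≠ X ∧ W ≠ V}, S.Val W.val := fun W => g ⟨W.1, W.2.2⟩
  have hfix : ∀ x, fixOthers V (Function.update g ⟨X, hXV⟩ x) = ltInt X V z x := by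
    intro x
    funext W
    by_cases hWX : W = X
    · subst hWX
      simp [fixOthers, ltInt, hXV]
    · by_cases hWV : W = V <;> simp [fixOthers, ltInt, hWX, hWV, hXV.symm, z]
  refine ((isValuation_evalAtoms β).leadsTo X V).2
    ⟨z, x₁, x₂, _, _, hx, ?_, hβ.atom_val _ V, hβ.atom_val _ V⟩
  simpa [structFuns, hfix] using hne

lemma recursiveF : RecursiveF hβ.structFuns := by
  intro a b hab hba
  obtain ⟨n, X, hX0, hXn, hX⟩ := (hab.trans hba).exists_path
  cases n with
  | zero => exact (hX 0 le_rfl).ne (hX0.trans hXn.symm)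
  | succ k =>
    have hcycle : X 0 = X (k + 2) := hX0.trans hXn.symm
    have hA6 := hβ _ (.a6 X k (fun i hi => (hX i (by omega)).ne)
        (hcycle ▸ (hX (k + 1) le_rfl).ne))
      ((AtomDetermined.chainConj X k).impl (.neg (.leadsTo _ _)))
    rw [(isValuation_evalAtoms β).impl, (isValuation_evalAtoms β).chainConj, hcycle] at hA6
    simpa [evalAtoms, hβ.leadsTo_of_dirAff (hX (k + 1) le_rfl)] using
      hA6 fun i hi => hβ.leadsTo_of_dirAff (hX i (by omega))

lemma intVal_eq (I : Intervention S) : intVal hβ.structFuns hβ.env I = hβ.val I :=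
  (Classical.epsilon_spec ⟨_, hβ.intervenedVal I⟩).unique hβ.recursiveF (hβ.intervenedVal I)

lemma satC_iff {φ : Form S} (h : IsC' φ) :
    SatC φ hβ.structFuns hβ.env ↔ evalAtoms β φ = true := by
  induction h with
  | intEq I Y y => simpa [SatC, hβ.intVal_eq, evalAtoms] using hβ.val_eq_iff
  | neg _ ih => simp [SatC, evalAtoms, ih]
  | conj _ _ ih₁ ih₂ => simp [SatC, evalAtoms, ih₁, ih₂]

end Consistent

/-- Theorem: the proof system L′_C is strongly complete for the language L′_C with
respect to recursive causal models. -/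
theorem LC'_strongly_complete (S : Sig) (Γ : Set (Form S)) (γ : Form S)
    (hΓ : ∀ ψ ∈ Γ, IsC' ψ) (hγ : IsC' γ)
    (hsem : ∀ (F : StructFuns S) (A : Env S), RecursiveF F → Complies F A →
      (∀ ψ ∈ Γ, SatC ψ F A) → SatC γ F A) :
    ProvC' Γ γ := by
  refine provC'_of_consistent (fun ψ hψ => (hΓ ψ hψ).atomDetermined) hγ.atomDetermined
    fun β hβ hβΓ => ?_
  refine (hβ.satC_iff hγ).1 (hsem _ _ hβ.recursiveF hβ.complies fun ψ hψ => ?_)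
  exact (hβ.satC_iff (hΓ ψ hψ)).2 (hβΓ ψ hψ)
end

section
/- The cut lemma: for all assignments [X⃗:=x⃗], tuples Y⃗ with values y⃗ and tuples Z⃗ with values z⃗, the formula ([X⃗:=x⃗]Y⃗=y⃗ ∧ [X⃗:=x⃗, Y⃗:=y⃗]Z⃗=z⃗) → [X⃗:=x⃗]Z⃗=z⃗ is provable in the system L′_C, where [X⃗:=x⃗]W⃗=w⃗ abbreviates the conjunction of the formulas [X⃗:=x⃗]W_i=w_i over the components of W⃗. -/
open Classical

variable {S : Sig}

/-- The assignment determined by a list of (variable, value) pairs. -/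
def ofList : List ((W : S.Var) × S.Val W) → Intervention S
  | [] => iEmpty S
  | p :: l => Function.update (ofList l) p.1 (some p.2)

/-- `[I]W⃗=w⃗`: the conjunction of the formulas `[I]Wᵢ=wᵢ` over the components of `W⃗`. -/
noncomputable def eqsConj (I : Intervention S) (L : List ((W : S.Var) × S.Val W)) : Form S :=
  bigConj (L.map (fun p => Form.int I (Form.eq p.1 p.2)))

/-! The single cut `[I]Y=y ∧ [I,Y:=y]Z=z → [I]Z=z` is a case split, by A2, on the value
`z'` of `Z` under `I`: if `z' ≠ z`, A3 turns `[I]Z=z'` into `[I,Y:=y]Z=z'`, which A1 rules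
out. Iterating A3 shows that `[I]Y⃗=y⃗` transports any `[I]W=w` to `[I,Y⃗:=y⃗]W=w`; in
particular each `[I]Yᵢ=yᵢ` holds under the partial assignments `[I,Y₁:=y₁,…]`, so the
components of `Y⃗` can be cut one at a time, and the conclusion is assembled componentwise.

Propositional reasoning inside `ThmC'` is done semantically: a formula that is true under
every truth assignment making a theorem true is itself a theorem. -/

def IsTruthAssignment (v : Form S → Bool) : Prop :=
  (∀ φ : Form S, v (Form.neg φ) = !(v φ)) ∧
    ∀ φ ψ : Form S, v (Form.conj φ ψ) = (v φ && v ψ)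

namespace IsTruthAssignment

variable {v : Form S → Bool} {φ ψ : Form S}

theorem neg_iff (hv : IsTruthAssignment v) : v (Form.neg φ) = true ↔ ¬ v φ = true := by
  simp [hv.1]

theorem conj_iff (hv : IsTruthAssignment v) :
    v (Form.conj φ ψ) = true ↔ v φ = true ∧ v ψ = true := by
  simp [hv.2]

theorem impl_iff (hv : IsTruthAssignment v) :
    v (Form.impl φ ψ) = true ↔ (v φ = true → v ψ = true) := by
  simp only [Form.impl, hv.neg_iff, hv.conj_iff]
  tauto

theorem orF_iff (hv : IsTruthAssignment v) :
    v (Form.orF φ ψ) = true ↔ v φ = true ∨ v ψ = true := by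
  simp only [Form.orF, hv.neg_iff, hv.conj_iff]
  tauto

theorem botF_ne_true (hv : IsTruthAssignment v) : ¬ v (botF S) = true := by
  simp only [botF, hv.neg_iff, hv.conj_iff]
  tauto

theorem foldl_conj_iff (hv : IsTruthAssignment v) (l : List (Form S)) (φ : Form S) :
    v (l.foldl Form.conj φ) = true ↔ v φ = true ∧ ∀ ψ ∈ l, v ψ = true := by
  induction l generalizing φ with
  | nil => simp
  | cons ψ l ih => simp only [List.foldl_cons, ih, hv.conj_iff, List.forall_mem_cons, and_assoc]

theorem foldl_orF_iff (hv : IsTruthAssignment v) (l : List (Form S)) (φ : Form S) :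
    v (l.foldl Form.orF φ) = true ↔ v φ = true ∨ ∃ ψ ∈ l, v ψ = true := by
  induction l generalizing φ with
  | nil => simp
  | cons ψ l ih =>
    simp only [List.foldl_cons, ih, hv.orF_iff, List.exists_mem_cons_iff, or_assoc]

theorem bigConj_iff (hv : IsTruthAssignment v) (l : List (Form S)) :
    v (bigConj l) = true ↔ ∀ ψ ∈ l, v ψ = true := by
  cases l with
  | nil => simpa [bigConj, topF, hv.neg_iff] using hv.botF_ne_true
  | cons φ l => simp only [bigConj, hv.foldl_conj_iff, List.forall_mem_cons]

theorem bigOr_iff (hv : IsTruthAssignment v) (l : List (Form S)) :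
    v (bigOr l) = true ↔ ∃ ψ ∈ l, v ψ = true := by
  cases l with
  | nil => simpa [bigOr] using hv.botF_ne_true
  | cons φ l => simp only [bigOr, hv.foldl_orF_iff, List.exists_mem_cons_iff]

theorem eqsConj_cons_iff (hv : IsTruthAssignment v) (I : Intervention S)
    (p : (W : S.Var) × S.Val W) (l : List ((W : S.Var) × S.Val W)) :
    v (eqsConj I (p :: l)) = true ↔
      v (Form.int I (Form.eq p.1 p.2)) = true ∧ v (eqsConj I l) = true := by
  simp only [eqsConj, hv.bigConj_iff, List.map_cons, List.forall_mem_cons]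

end IsTruthAssignment

theorem icomp_ofList_nil (I : Intervention S) : icomp I (ofList []) = I := rfl

theorem icomp_ofList_cons (I : Intervention S) (p : (W : S.Var) × S.Val W)
    (l : List ((W : S.Var) × S.Val W)) :
    icomp I (ofList (p :: l)) = iUpd (icomp I (ofList l)) p.1 p.2 := by
  funext W
  by_cases h : W = p.1
  · subst h
    simp [icomp, ofList, iUpd]
  · simp [icomp, ofList, iUpd, Function.update_of_ne h]

namespace ThmC'

variable {φ ψ χ : Form S}

theorem of_tautology (h : ∀ v, IsTruthAssignment v → v φ = true) : ThmC' φ :=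
  taut fun v hn hc => h v ⟨hn, hc⟩

theorem of_imp_tautologically (h : ThmC' φ)
    (hφψ : ∀ v, IsTruthAssignment v → v φ = true → v ψ = true) : ThmC' ψ :=
  (of_tautology fun v hv => hv.impl_iff.2 (hφψ v hv)).mp h

theorem conj_intro (hφ : ThmC' φ) (hψ : ThmC' ψ) : ThmC' (Form.conj φ ψ) := by
  have hpair : ThmC' (Form.impl φ (Form.impl ψ (Form.conj φ ψ))) :=
    of_tautology fun v hv => by
      simp only [hv.impl_iff, hv.conj_iff]
      exact fun h₁ h₂ => ⟨h₁, h₂⟩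
  exact (hpair.mp hφ).mp hψ

theorem impl_conj_right : ThmC' (Form.impl (Form.conj φ ψ) ψ) :=
  of_tautology fun _ hv => hv.impl_iff.2 fun h => (hv.conj_iff.1 h).2

theorem bigConj_intro : ∀ {l : List (Form S)}, (∀ φ ∈ l, ThmC' φ) → ThmC' (bigConj l)
  | [], _ => of_tautology fun _ hv => (hv.bigConj_iff []).2 (by simp)
  | φ :: l, h => by
    rw [List.forall_mem_cons] at h
    refine (h.1.conj_intro (bigConj_intro h.2)).of_imp_tautologically fun v hv => ?_
    simp only [hv.conj_iff, hv.bigConj_iff, List.forall_mem_cons, imp_self]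

theorem impl_bigConj {l : List (Form S)} (h : ∀ φ ∈ l, ThmC' (Form.impl χ φ)) :
    ThmC' (Form.impl χ (bigConj l)) := by
  refine (bigConj_intro (l := l.map (Form.impl χ)) (by simpa using h)).of_imp_tautologically ?_
  intro v hv
  simp only [hv.bigConj_iff, List.forall_mem_map, hv.impl_iff]
  exact fun hl hχ φ hφ => hl φ hφ hχ

theorem of_bigOr {l : List (Form S)} (hl : ThmC' (bigOr l))
    (h : ∀ φ ∈ l, ThmC' (Form.impl φ χ)) : ThmC' χ := by
  have himp : ThmC' (bigConj (l.map (Form.impl · χ))) := bigConj_intro (by simpa using h)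
  refine (hl.conj_intro himp).of_imp_tautologically fun v hv => ?_
  simp only [hv.conj_iff, hv.bigOr_iff, hv.bigConj_iff, List.forall_mem_map, hv.impl_iff]
  rintro ⟨⟨φ, hφ, hvφ⟩, hall⟩
  exact hall φ hφ hvφ

open Form

theorem cut_atom (I : Intervention S) (Y : S.Var) (y : S.Val Y) (Z : S.Var) (z : S.Val Z) :
    ThmC' (impl (conj (int I (eq Y y)) (int (iUpd I Y y) (eq Z z))) (int I (eq Z z))) := by
  refine of_bigOr (a2 I Z) ?_
  simp only [List.mem_map, Finset.mem_toList, Finset.mem_univ, true_and]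
  rintro _ ⟨z', rfl⟩
  by_cases hz : z' = z
  · subst hz
    exact of_tautology fun v hv => by
      simp only [hv.impl_iff]
      exact fun h _ => h
  · have hA3 := a3 I Y Z y z'
    have hA1 := a1 (iUpd I Y y) Z z z' (Ne.symm hz)
    refine (hA3.conj_intro hA1).of_imp_tautologically fun v hv => ?_
    simp only [hv.impl_iff, hv.conj_iff, hv.neg_iff]
    tauto

theorem int_icomp_ofList (I : Intervention S) :
    ∀ (Ys : List ((W : S.Var) × S.Val W)) (W : S.Var) (w : S.Val W),
      ThmC' (impl (conj (eqsConj I Ys) (int I (eq W w))) (int (icomp I (ofList Ys)) (eq W w)))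
  | [], W, w => by
    rw [icomp_ofList_nil]
    exact impl_conj_right
  | p :: l, W, w => by
    rw [icomp_ofList_cons]
    have ihW := int_icomp_ofList I l W w
    have ihp := int_icomp_ofList I l p.1 p.2
    have hA3 := a3 (icomp I (ofList l)) p.1 W p.2 w
    refine ((ihW.conj_intro ihp).conj_intro hA3).of_imp_tautologically fun v hv => ?_
    simp only [hv.impl_iff, hv.conj_iff, hv.eqsConj_cons_iff]
    tauto

theorem cut_eqsConj_atom (I : Intervention S) :
    ∀ (Ys : List ((W : S.Var) × S.Val W)) (Z : S.Var) (z : S.Val Z),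
      ThmC' (impl (conj (eqsConj I Ys) (int (icomp I (ofList Ys)) (eq Z z))) (int I (eq Z z)))
  | [], Z, z => by
    rw [icomp_ofList_nil]
    exact impl_conj_right
  | p :: l, Z, z => by
    rw [icomp_ofList_cons]
    have ih := cut_eqsConj_atom I l Z z
    have hp := int_icomp_ofList I l p.1 p.2
    have hcut := cut_atom (icomp I (ofList l)) p.1 p.2 Z z
    refine ((ih.conj_intro hp).conj_intro hcut).of_imp_tautologically fun v hv => ?_
    simp only [hv.impl_iff, hv.conj_iff, hv.eqsConj_cons_iff]
    tauto

end ThmC'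

theorem cut_lemma_general (S : Sig) (I : Intervention S)
    (Ys Zs : List ((W : S.Var) × S.Val W)) :
    ThmC' (Form.impl
      (Form.conj (eqsConj I Ys) (eqsConj (icomp I (ofList Ys)) Zs))
      (eqsConj I Zs)) := by
  refine ThmC'.impl_bigConj fun φ hφ => ?_
  obtain ⟨⟨Z, z⟩, hZ, rfl⟩ := List.mem_map.1 hφ
  refine (ThmC'.cut_eqsConj_atom I Ys Z z).of_imp_tautologically fun v hv => ?_
  have hZs : v (eqsConj (icomp I (ofList Ys)) Zs) = true →
      v (Form.int (icomp I (ofList Ys)) (Form.eq Z z)) = true := fun h =>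
    (hv.bigConj_iff _).1 h _ (List.mem_map_of_mem hZ)
  simp only [hv.impl_iff, hv.conj_iff] at hZs ⊢
  tauto

/-- Theorem (cut lemma): `([X⃗:=x⃗]Y⃗=y⃗ ∧ [X⃗:=x⃗, Y⃗:=y⃗]Z⃗=z⃗) → [X⃗:=x⃗]Z⃗=z⃗` is
provable in L′_C. -/
theorem cut_lemma (S : Sig) (I : Intervention S)
    (Ys Zs : List ((W : S.Var) × S.Val W))
    (hY : (Ys.map Sigma.fst).Nodup) (hZ : (Zs.map Sigma.fst).Nodup) :
    ThmC' (Form.impl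
      (Form.conj (eqsConj I Ys) (eqsConj (icomp I (ofList Ys)) Zs))
      (eqsConj I Zs)) :=
  cut_lemma_general S I Ys Zs
end

section
/- The canonical structure is a recursive causal model: for every maximally L′_C-consistent set Γ of L′_C formulas, the pair ⟨F^Γ, A^Γ⟩ is a recursive causal model, i.e., (i) the valuation A^Γ complies with the structural functions F^Γ, and (ii) F^Γ is recursive (the transitive closure of its direct causal dependence relation is asymmetric and transitive). -/
open Classical

variable {S : Sig}

/-- `Γ` is L′_C-consistent. -/
def ConsistentC' (Γ : Set (Form S)) : Prop :=
  ¬ ∃ φ : Form S, ProvC' Γ φ ∧ ProvC' Γ (Form.neg φ)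

/-- `Γ` is a maximally L′_C-consistent set of L′_C formulas. -/
def MCS (Γ : Set (Form S)) : Prop :=
  (∀ φ ∈ Γ, IsC' φ) ∧ ConsistentC' Γ ∧ ∀ φ : Form S, IsC' φ → (φ ∈ Γ ∨ Form.neg φ ∈ Γ)

/-- The assignment setting every variable other than `V` to its value under `g`. -/
def fullIntOf {V : S.Var} (g : Others S V) : Intervention S :=
  fun W => if h : W = V then none else some (g ⟨W, h⟩)

/-- The canonical structural functions of a maximally consistent set `Γ`:
`F^Γ_V(u⃗, y⃗) = v` iff `[U⃗:=u⃗, Y⃗:=y⃗]V=v ∈ Γ` (where `U⃗, Y⃗` list all variables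
other than `V`); axioms A1 and A2 make this well defined. -/
noncomputable def canonF (Γ : Set (Form S)) : StructFuns S :=
  fun V g => Classical.epsilon (fun v : S.Val V => Form.int (fullIntOf g) (Form.eq V v) ∈ Γ)

/-- The canonical valuation of a maximally consistent set `Γ`:
`A^Γ(Z) = z` iff `[]Z=z ∈ Γ`; axioms A1 and A2 make this well defined. -/
noncomputable def canonA (Γ : Set (Form S)) : Env S :=
  fun X => Classical.epsilon (fun x : S.Val X => Form.int (iEmpty S) (Form.eq X x) ∈ Γ)

/-! Compliance: from `[]W = A^Γ(W) ∈ Γ`, axioms A3 and A4 add the assignments `Y := A^Γ(Y)`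
to the intervention one variable at a time, ending with `[Y⃗ := A^Γ(Y⃗)]V = A^Γ(V) ∈ Γ` for the
intervention on all variables other than `V`, i.e. `F^Γ_V(A^Γ(Y⃗)) = A^Γ(V)`.
Recursiveness: a direct dependence of `V` on `X` under `F^Γ` is witnessed by two formulas of `Γ`
forming a disjunct of `X ⇝ V`, so a causal cycle would put `X₀ ⇝ X₁ ∧ ⋯ ∧ X_k ⇝ X_{k+1}`
together with `X_{k+1} ⇝ X₀` into `Γ`, against A6. -/

structure IsBoolValuation (v : Form S → Bool) : Prop where
  neg : ∀ φ, v (Form.neg φ) = !v φ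
  conj : ∀ φ ψ, v (Form.conj φ ψ) = (v φ && v ψ)

lemma tauto_of_forall_isBoolValuation {φ : Form S}
    (h : ∀ v, IsBoolValuation v → v φ = true) : Tauto φ :=
  fun v hn hc => h v ⟨hn, hc⟩

namespace IsBoolValuation

variable {v : Form S → Bool} (hv : IsBoolValuation v)
include hv

lemma impl (φ ψ : Form S) : v (Form.impl φ ψ) = (!v φ || v ψ) := by
  simp [Form.impl, hv.neg, hv.conj]

lemma orF (φ ψ : Form S) : v (Form.orF φ ψ) = (v φ || v ψ) := by
  simp [Form.orF, hv.neg, hv.conj]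

lemma botF : v (botF S) = false := by
  simp [_root_.botF, hv.neg, hv.conj]

lemma foldl_orF (l : List (Form S)) (φ : Form S) :
    v (l.foldl Form.orF φ) = (v φ || l.any v) := by
  induction l generalizing φ with
  | nil => simp
  | cons ψ l ih => simp only [List.foldl_cons, ih, hv.orF, List.any_cons, Bool.or_assoc]

lemma bigOr (l : List (Form S)) : v (_root_.bigOr l) = l.any v := by
  cases l with
  | nil => simp [_root_.bigOr, hv.botF]
  | cons φ l => simp [_root_.bigOr, hv.foldl_orF, List.any_cons]

lemma impsFrom (l : List (Form S)) (φ : Form S) :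
    v (_root_.impsFrom l φ) = (!l.all v || v φ) := by
  induction l with
  | nil => simp [_root_.impsFrom]
  | cons ψ l ih =>
    simp only [_root_.impsFrom, hv.impl, ih, List.all_cons]
    cases v ψ <;> simp

end IsBoolValuation

namespace ProvC'

variable {Γ : Set (Form S)}

lemma of_thm {φ : Form S} (h : ThmC' φ) : ProvC' Γ φ :=
  ⟨[], by simp, h⟩

lemma of_mem {φ : Form S} (h : φ ∈ Γ) : ProvC' Γ φ := by
  refine ⟨[φ], by simp [h], ThmC'.taut <| tauto_of_forall_isBoolValuation fun v hv => ?_⟩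
  simp only [impsFrom, hv.impl]
  cases v φ <;> rfl

lemma mp {φ ψ : Form S} (h₁ : ProvC' Γ (Form.impl φ ψ)) (h₂ : ProvC' Γ φ) : ProvC' Γ ψ := by
  obtain ⟨l₁, hl₁, t₁⟩ := h₁
  obtain ⟨l₂, hl₂, t₂⟩ := h₂
  have hcut : Tauto (Form.impl (impsFrom l₁ (Form.impl φ ψ))
      (Form.impl (impsFrom l₂ φ) (impsFrom (l₁ ++ l₂) ψ))) := by
    refine tauto_of_forall_isBoolValuation fun v hv => ?_
    simp only [hv.impl, hv.impsFrom, List.all_append]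
    cases l₁.all v <;> cases l₂.all v <;> cases v φ <;> cases v ψ <;> rfl
  refine ⟨l₁ ++ l₂, fun χ hχ => ?_, ((ThmC'.taut hcut).mp t₁).mp t₂⟩
  exact (List.mem_append.1 hχ).elim (hl₁ χ) (hl₂ χ)

end ProvC'

lemma isC'_bigOr {l : List (Form S)} (hne : l ≠ []) (hl : ∀ φ ∈ l, IsC' φ) :
    IsC' (bigOr l) := by
  obtain ⟨φ, l, rfl⟩ := List.exists_cons_of_ne_nil hne
  simp only [List.forall_mem_cons] at hl
  induction l generalizing φ with
  | nil => exact hl.1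
  | cons ψ l ih =>
    simp only [List.forall_mem_cons] at hl
    exact ih (Form.orF φ ψ) (List.cons_ne_nil _ _)
      ⟨.neg (.conj (.neg hl.1) (.neg hl.2.1)), hl.2.2⟩

def Env.interventionOn (A : Env S) (s : Finset S.Var) : Intervention S :=
  fun W => if W ∈ s then some (A W) else none

lemma Env.interventionOn_empty (A : Env S) : A.interventionOn ∅ = iEmpty S := by
  funext W
  simp [Env.interventionOn, iEmpty]

lemma Env.interventionOn_insert (A : Env S) (s : Finset S.Var) (Y : S.Var) :
    A.interventionOn (insert Y s) = iUpd (A.interventionOn s) Y (A Y) := by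
  funext W
  by_cases hWY : W = Y
  · subst hWY
    simp [Env.interventionOn, iUpd]
  · simp [Env.interventionOn, iUpd, hWY]

lemma fullIntOf_restrict (A : Env S) (V : S.Var) :
    fullIntOf (A.restrict V) = A.interventionOn (Finset.univ.erase V) := by
  funext W
  by_cases hWV : W = V
  · subst hWV
    simp [fullIntOf, Env.interventionOn]
  · simp [fullIntOf, Env.interventionOn, Env.restrict, hWV]

lemma ltInt_eq_fullIntOf_update {X V : S.Var} (hXV : X ≠ V) (g : Others S V) (x : S.Val X) :
    ltInt X V (fun W => g ⟨W.1, W.2.2⟩) x = fullIntOf (Function.update g ⟨X, hXV⟩ x) := by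
  funext W
  by_cases hWX : W = X
  · subst hWX
    simp [ltInt, fullIntOf, hXV]
  · by_cases hWV : W = V
    · subst hWV
      simp [ltInt, fullIntOf, hWX]
    · simp [ltInt, fullIntOf, hWX, hWV]

namespace MCS

variable {Γ : Set (Form S)} (hΓ : MCS Γ)
include hΓ

lemma mem_of_provC' {φ : Form S} (hφ : IsC' φ) (h : ProvC' Γ φ) : φ ∈ Γ :=
  (hΓ.2.2 φ hφ).resolve_right fun hneg => hΓ.2.1 ⟨φ, h, .of_mem hneg⟩

lemma conj_mem {φ ψ : Form S} (hφ : φ ∈ Γ) (hψ : ψ ∈ Γ) : Form.conj φ ψ ∈ Γ := by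
  have hintro : Tauto (Form.impl φ (Form.impl ψ (Form.conj φ ψ))) := by
    refine tauto_of_forall_isBoolValuation fun v hv => ?_
    simp only [hv.impl, hv.conj]
    cases v φ <;> cases v ψ <;> rfl
  exact hΓ.mem_of_provC' (.conj (hΓ.1 φ hφ) (hΓ.1 ψ hψ))
    (((ProvC'.of_thm (.taut hintro)).mp (.of_mem hφ)).mp (.of_mem hψ))

lemma exists_mem_of_bigOr_mem {l : List (Form S)} (hl : ∀ φ ∈ l, IsC' φ)
    (h : bigOr l ∈ Γ) : ∃ φ ∈ l, φ ∈ Γ := by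
  by_contra! hnone
  have hneg : ∀ φ ∈ l.map Form.neg, φ ∈ Γ := by
    simp only [List.forall_mem_map]
    exact fun φ hφ => (hΓ.2.2 φ (hl φ hφ)).resolve_left (hnone φ hφ)
  have hdeMorgan : Tauto (impsFrom (l.map Form.neg) (Form.neg (bigOr l))) := by
    refine tauto_of_forall_isBoolValuation fun v hv => ?_
    simp only [hv.impsFrom, hv.neg, hv.bigOr, List.all_map]
    have hall : l.all (v ∘ Form.neg) = !l.any v := by
      simp only [Function.comp_def, hv.neg, List.not_any_eq_all_not]
    rw [hall]
    cases l.any v <;> rfl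
  exact hΓ.2.1 ⟨bigOr l, .of_mem h, ⟨_, hneg, .taut hdeMorgan⟩⟩

lemma bigOr_mem {l : List (Form S)} (hl : ∀ φ ∈ l, IsC' φ) {φ : Form S} (hφl : φ ∈ l)
    (hφ : φ ∈ Γ) : bigOr l ∈ Γ := by
  have hweaken : Tauto (Form.impl φ (bigOr l)) := by
    refine tauto_of_forall_isBoolValuation fun v hv => ?_
    rw [hv.impl, hv.bigOr]
    cases hvφ : v φ
    · rfl
    · simpa using ⟨φ, hφl, hvφ⟩
  exact hΓ.mem_of_provC' (isC'_bigOr (List.ne_nil_of_mem hφl) hl)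
    ((ProvC'.of_thm (.taut hweaken)).mp (.of_mem hφ))

lemma exists_int_eq_mem (I : Intervention S) (V : S.Var) :
    ∃ v : S.Val V, Form.int I (Form.eq V v) ∈ Γ := by
  set l := (Finset.univ : Finset (S.Val V)).toList.map fun v => Form.int I (Form.eq V v)
  have hl : ∀ φ ∈ l, IsC' φ := by
    simp only [l, List.forall_mem_map]
    exact fun v _ => .intEq I V v
  have hne : l ≠ [] := by simp [l, Finset.univ_nonempty.ne_empty]
  obtain ⟨φ, hφl, hφ⟩ :=
    hΓ.exists_mem_of_bigOr_mem hl (hΓ.mem_of_provC' (isC'_bigOr hne hl) (.of_thm (.a2 I V)))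
  obtain ⟨v, -, rfl⟩ := List.mem_map.1 hφl
  exact ⟨v, hφ⟩

lemma int_eq_unique {I : Intervention S} {V : S.Var} {v v' : S.Val V}
    (h : Form.int I (Form.eq V v) ∈ Γ) (h' : Form.int I (Form.eq V v') ∈ Γ) : v = v' := by
  by_contra hne
  exact hΓ.2.1 ⟨_, .of_mem h', (ProvC'.of_thm (.a1 I V v v' hne)).mp (.of_mem h)⟩

lemma canonF_mem (V : S.Var) (g : Others S V) :
    Form.int (fullIntOf g) (Form.eq V (canonF Γ V g)) ∈ Γ :=
  Classical.epsilon_spec (hΓ.exists_int_eq_mem (fullIntOf g) V)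

lemma canonF_eq {V : S.Var} {g : Others S V} {v : S.Val V}
    (h : Form.int (fullIntOf g) (Form.eq V v) ∈ Γ) : canonF Γ V g = v :=
  hΓ.int_eq_unique (hΓ.canonF_mem V g) h

lemma canonA_mem (X : S.Var) : Form.int (iEmpty S) (Form.eq X (canonA Γ X)) ∈ Γ :=
  Classical.epsilon_spec (hΓ.exists_int_eq_mem (iEmpty S) X)

lemma iUpd_canonA_mem {I : Intervention S}
    (hI : ∀ W, Form.int I (Form.eq W (canonA Γ W)) ∈ Γ) (Y W : S.Var) :
    Form.int (iUpd I Y (canonA Γ Y)) (Form.eq W (canonA Γ W)) ∈ Γ := by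
  by_cases hWY : W = Y
  · subst hWY
    exact hΓ.mem_of_provC' (.intEq _ _ _) (.of_thm (.a4 I W _))
  · exact hΓ.mem_of_provC' (.intEq _ _ _)
      ((ProvC'.of_thm (.a3 I Y W _ _)).mp (.of_mem (hΓ.conj_mem (hI Y) (hI W))))

lemma interventionOn_canonA_mem (s : Finset S.Var) (W : S.Var) :
    Form.int ((canonA Γ).interventionOn s) (Form.eq W (canonA Γ W)) ∈ Γ := by
  induction s using Finset.induction_on generalizing W with
  | empty => simpa only [Env.interventionOn_empty] using hΓ.canonA_mem W
  | insert Y s _ ih => simpa only [Env.interventionOn_insert] using hΓ.iUpd_canonA_mem ih Y W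

lemma complies_canonF_canonA : Complies (canonF Γ) (canonA Γ) := fun V _ =>
  (hΓ.canonF_eq (by
    simpa only [fullIntOf_restrict] using hΓ.interventionOn_canonA_mem _ V)).symm

lemma leadsTo_mem_of_dirAff {X V : S.Var} (h : DirAff (canonF Γ) X V) : leadsTo X V ∈ Γ := by
  obtain ⟨-, hXV, g, x₁, x₂, hx, hv⟩ := h
  refine hΓ.bigOr_mem ?_ (List.mem_map_of_mem (Finset.mem_toList.2 (Finset.mem_filter.2
    ⟨Finset.mem_univ ⟨fun W => g ⟨W.1, W.2.2⟩, (x₁, x₂), (_, _)⟩, hx, hv⟩))) ?_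
  · simp only [List.forall_mem_map]
    exact fun _ _ => .conj (.intEq _ _ _) (.intEq _ _ _)
  · simp only [ltInt_eq_fullIntOf_update hXV]
    exact hΓ.conj_mem (hΓ.canonF_mem V _) (hΓ.canonF_mem V _)

lemma chainConj_mem (f : ℕ → S.Var) (k : ℕ)
    (h : ∀ i ≤ k, DirAff (canonF Γ) (f i) (f (i + 1))) : chainConj f k ∈ Γ := by
  induction k with
  | zero => exact hΓ.leadsTo_mem_of_dirAff (h 0 le_rfl)
  | succ k ih =>
    exact hΓ.conj_mem (ih fun i hi => h i (by omega)) (hΓ.leadsTo_mem_of_dirAff (h (k + 1) le_rfl))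

lemma recursiveF_canonF : RecursiveF (canonF Γ) := by
  intro a b hab hba
  obtain ⟨n, f, hf0, hfn, hf⟩ := (hab.trans hba).exists_path
  have hcycle : f (n + 1) = f 0 := hfn.trans hf0.symm
  have hne : ∀ i ≤ n, f i ≠ f (i + 1) := fun i hi => (hf i hi).2.1
  cases n with
  | zero => exact hne 0 le_rfl hcycle.symm
  | succ k =>
    have hlast : f (k + 1) ≠ f 0 := hcycle ▸ hne (k + 1) le_rfl
    have hA6 := ThmC'.a6 f k (fun i hi => hne i (by omega)) hlast
    refine hΓ.2.1 ⟨_, .of_mem (hcycle ▸ hΓ.leadsTo_mem_of_dirAff (hf (k + 1) le_rfl)), ?_⟩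
    exact (ProvC'.of_thm hA6).mp (.of_mem (hΓ.chainConj_mem f k fun i hi => hf i (by omega)))

end MCS

/-- Theorem: the canonical structure of a maximally L′_C-consistent set is a
recursive causal model. -/
theorem canonical_structure_is_recursive_causal_model (S : Sig)
    (Γ : Set (Form S)) (hΓ : MCS Γ) :
    Complies (canonF Γ) (canonA Γ) ∧ RecursiveF (canonF Γ) :=
  ⟨hΓ.complies_canonF_canonA, hΓ.recursiveF_canonF⟩
end
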